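/- arXiv:1911.12435 — 8 statements merged into one kernel-verified Lean document; each statement's English description precedes it below -/
import Mathlib

section
/- Let k > 0, φ ∈ ℝ, A ∈ ℝ and L > 2π/k. Define f : ℝ → ℝ by f(x) = A·cos(φ + k·x), and assume f(0) ≠ 0 and f(L) ≠ 0. Then the sets Z := {x ∈ (0,L) : f(x) = 0} and W := {x ∈ (0,L) : f'(x) = 0} are finite, each has at least two elements, and 2·(|Z| − |W|) = −( sgn( f(0)·f'(0) ) + sgn( f(L)·(−f'(L)) ) ), where f'(0) and −f'(L) are the derivatives of f at the two endpoints taken in the direction pointing into the interval (0,L). -/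
/-!
With `θ = φ + k x`, nodal points correspond to the `θ ∈ (φ, φ + k L)` lying in `(ℤ + 1/2) π`
and Neumann points to those in `ℤ π`, so both counts are `⌈b⌉ - ⌊a⌋ - 1` for the endpoints
`a, b` of `(φ / π, (φ + k L) / π)`, shifted by `1/2` for the nodal count. Their difference
splits into one term per endpoint, each determined by whether the fractional part of `θ / π`
lies below or above `1/2`, that is, by the sign of `sin 2θ = 2 sin θ cos θ`. Up to the
positive factor `A² k / 2`, this is the product of `f` and the inward derivative at that endpoint.
-/

/-- sgn(x) = 1 if x > 0 and sgn(x) = -1 if x ≤ 0. -/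
noncomputable def sgn (x : ℝ) : ℝ := if 0 < x then 1 else -1

open Real Set

lemma sgn_mul_of_pos {c : ℝ} (hc : 0 < c) (x : ℝ) : sgn (c * x) = sgn x := by
  simp only [sgn, mul_pos_iff_of_pos_left hc]

lemma setOf_intCast_mem_Ioo (a b : ℝ) :
    {n : ℤ | (n : ℝ) ∈ Ioo a b} = Finset.Ioo ⌊a⌋ ⌈b⌉ := by
  ext n
  simp [Int.floor_lt, Int.lt_ceil]

lemma ncard_setOf_intCast_mem_Ioo {a b : ℝ} (hab : a < b) :
    ({n : ℤ | (n : ℝ) ∈ Ioo a b}.ncard : ℤ) = ⌈b⌉ - ⌊a⌋ - 1 := by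
  have : ⌊a⌋ < ⌈b⌉ := Int.cast_lt.1 ((Int.floor_le a).trans_lt (hab.trans_le (Int.le_ceil b)))
  rw [setOf_intCast_mem_Ioo, ncard_coe_finset, Int.card_Ioo, Int.toNat_of_nonneg (by omega)]

lemma two_le_ceil_sub_floor_sub_one {a b : ℝ} (h : a + 2 < b) : 2 ≤ ⌈b⌉ - ⌊a⌋ - 1 := by
  have : ((⌊a⌋ + 2 : ℤ) : ℝ) < ⌈b⌉ := by
    push_cast
    linarith [Int.floor_le a, Int.le_ceil b]
  have := Int.cast_lt.1 this
  omega

section Lattice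

variable {k : ℝ} (φ L c : ℝ)

lemma setOf_affine_mem_lattice_eq_image (hk : 0 < k) :
    {x ∈ Ioo 0 L | ∃ n : ℤ, φ + k * x = (n + c) * π} =
      (fun n : ℤ => ((n + c) * π - φ) / k) ''
        {n : ℤ | (n : ℝ) ∈ Ioo (φ / π - c) ((φ + k * L) / π - c)} := by
  ext x
  simp only [mem_ofPred_eq, mem_Ioo, mem_image, sub_lt_iff_lt_add, lt_sub_iff_add_lt,
    div_lt_iff₀ pi_pos, lt_div_iff₀ pi_pos]
  constructor
  · rintro ⟨⟨hx0, hxL⟩, n, hn⟩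
    refine ⟨n, ⟨?_, ?_⟩, ?_⟩
    · nlinarith
    · nlinarith
    · field_simp
      linarith
  · rintro ⟨n, ⟨hn0, hnL⟩, rfl⟩
    refine ⟨⟨?_, ?_⟩, n, ?_⟩
    · exact div_pos (by nlinarith) hk
    · rw [div_lt_iff₀ hk]
      nlinarith
    · field_simp
      ring

lemma finite_setOf_affine_mem_lattice (hk : 0 < k) :
    {x ∈ Ioo 0 L | ∃ n : ℤ, φ + k * x = (n + c) * π}.Finite := by
  rw [setOf_affine_mem_lattice_eq_image φ L c hk, setOf_intCast_mem_Ioo]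
  exact (Finset.finite_toSet _).image _

lemma ncard_setOf_affine_mem_lattice (hk : 0 < k) (hL : 0 < L) :
    ({x ∈ Ioo 0 L | ∃ n : ℤ, φ + k * x = (n + c) * π}.ncard : ℤ) =
      ⌈(φ + k * L) / π - c⌉ - ⌊φ / π - c⌋ - 1 := by
  have hinj : Function.Injective (fun n : ℤ => ((n + c) * π - φ) / k) := by
    intro m n h
    have : ((m : ℝ) + c) * π = (n + c) * π := by
      simpa [div_left_inj' hk.ne', sub_left_inj] using h
    exact_mod_cast add_right_cancel (mul_right_cancel₀ pi_ne_zero this)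
  rw [setOf_affine_mem_lattice_eq_image φ L c hk, ncard_image_of_injective _ hinj,
    ncard_setOf_intCast_mem_Ioo]
  gcongr
  nlinarith

end Lattice

lemma cos_eq_zero_iff_exists_eq_add_half_mul_pi {θ : ℝ} :
    cos θ = 0 ↔ ∃ n : ℤ, θ = (n + 1 / 2) * π := by
  simp only [cos_eq_zero_iff]
  exact exists_congr fun n => by ring_nf

lemma sin_eq_zero_iff_exists_eq_int_mul_pi {θ : ℝ} :
    sin θ = 0 ↔ ∃ n : ℤ, θ = n * π := by
  rw [sin_eq_zero_iff]
  exact exists_congr fun n => eq_comm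

/-- Both sides only depend on whether the fractional part of `θ / π` lies below or above `1/2`
(then `sin (2θ) ≥ 0`, resp. `< 0`); at `1/2` itself, excluded by `cos θ ≠ 0`, they differ. -/
lemma two_mul_floor_sub_floor_sub_half {θ : ℝ} (h : cos θ ≠ 0) :
    2 * ((⌊θ / π⌋ - ⌊θ / π - 1 / 2⌋ : ℤ) : ℝ) = 1 - sgn (-sin (2 * θ)) := by
  set n := ⌊θ / π⌋
  set t := Int.fract (θ / π)
  have hθ : θ = (n + t) * π := by
    rw [Int.floor_add_fract, div_mul_cancel₀ _ pi_ne_zero]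
  have ht0 : 0 ≤ t := Int.fract_nonneg _
  have ht1 : t < 1 := Int.fract_lt_one _
  have hsin : sin (2 * θ) = sin (2 * π * t) := by
    rw [← sin_add_int_mul_two_pi (2 * π * t) n, hθ]
    ring_nf
  have hα : θ / π - 1 / 2 = n + (t - 1 / 2) := by
    rw [hθ, mul_div_cancel_right₀ _ pi_ne_zero]
    ring
  have ht : t ≠ 1 / 2 := by
    intro ht
    exact h (cos_eq_zero_iff_exists_eq_add_half_mul_pi.2 ⟨n, ht ▸ hθ⟩)
  rw [hsin, hα, Int.floor_intCast_add]
  rcases ht.lt_or_gt with ht | ht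
  · have hfl : ⌊t - 1 / 2⌋ = -1 :=
      Int.floor_eq_iff.2 ⟨by push_cast; linarith, by push_cast; linarith⟩
    have : 0 ≤ sin (2 * π * t) :=
      sin_nonneg_of_nonneg_of_le_pi (by positivity) (by nlinarith [pi_pos])
    rw [hfl, sgn, if_neg (by linarith)]
    norm_num
  · have hfl : ⌊t - 1 / 2⌋ = 0 :=
      Int.floor_eq_iff.2 ⟨by push_cast; linarith, by push_cast; linarith⟩
    have : sin (2 * π * t) < 0 := by
      rw [← sin_sub_two_pi]
      exact sin_neg_of_neg_of_neg_pi_lt (by nlinarith [pi_pos]) (by nlinarith [pi_pos])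
    rw [hfl, sgn, if_pos (by linarith)]
    norm_num

/-- Right endpoint, obtained from the left one by the reflection `θ ↦ π - θ`. -/
lemma two_mul_ceil_sub_half_sub_ceil {θ : ℝ} (h : cos θ ≠ 0) :
    2 * ((⌈θ / π - 1 / 2⌉ - ⌈θ / π⌉ : ℤ) : ℝ) = -1 - sgn (sin (2 * θ)) := by
  have key := two_mul_floor_sub_floor_sub_half (θ := π - θ) (by rwa [cos_pi_sub, neg_ne_zero])
  have h1 : (π - θ) / π = ((1 : ℤ) : ℝ) + -(θ / π) := by field_simp; push_cast; ring
  have h2 : (π - θ) / π - 1 / 2 = -(θ / π - 1 / 2) := by field_simp; ring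
  have h3 : 2 * (π - θ) = 2 * π - 2 * θ := by ring
  rw [h2, h1, h3, Int.floor_intCast_add, Int.floor_neg, Int.floor_neg, sin_two_pi_sub,
    neg_neg] at key
  push_cast at key ⊢
  linarith

lemma two_mul_sub_floor_ceil_eq_neg_sgn_add_sgn {a b : ℝ} (ha : cos a ≠ 0) (hb : cos b ≠ 0) :
    2 * (((⌈b / π - 1 / 2⌉ - ⌊a / π - 1 / 2⌋ - 1) - (⌈b / π⌉ - ⌊a / π⌋ - 1) : ℤ) : ℝ) =
      -(sgn (-sin (2 * a)) + sgn (sin (2 * b))) := by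
  have hleft := two_mul_floor_sub_floor_sub_half ha
  have hright := two_mul_ceil_sub_half_sub_ceil hb
  push_cast at hleft hright ⊢
  linear_combination hleft + hright

lemma deriv_const_mul_cos_affine (A φ k x : ℝ) :
    deriv (fun x => A * cos (φ + k * x)) x = -(A * k) * sin (φ + k * x) := by
  have hθ : HasDerivAt (fun x => φ + k * x) k x := by
    simpa using ((hasDerivAt_id x).const_mul k).const_add φ
  rw [(hθ.cos.const_mul A).deriv]
  ring

/-- For `f x = A cos (φ + k x)` on an interval of length `L > 2π/k` with nonvanishing
endpoint values, the sets of interior zeros of `f` and of `f'` are finite with at least two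
elements each, and twice the difference of their cardinalities equals
`-(sgn (f(0)·f'(0)) + sgn (f(L)·(−f'(L))))`. -/
theorem stmt_1 (k φ A L : ℝ) (hk : 0 < k) (hL : 2 * Real.pi / k < L)
    (f : ℝ → ℝ) (hf : ∀ x, f x = A * Real.cos (φ + k * x))
    (h0 : f 0 ≠ 0) (hLend : f L ≠ 0) :
    {x ∈ Set.Ioo 0 L | f x = 0}.Finite ∧
    {x ∈ Set.Ioo 0 L | deriv f x = 0}.Finite ∧
    2 ≤ {x ∈ Set.Ioo 0 L | f x = 0}.ncard ∧
    2 ≤ {x ∈ Set.Ioo 0 L | deriv f x = 0}.ncard ∧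
    2 * (({x ∈ Set.Ioo 0 L | f x = 0}.ncard : ℝ)
          - ({x ∈ Set.Ioo 0 L | deriv f x = 0}.ncard : ℝ))
      = -(sgn (f 0 * deriv f 0) + sgn (f L * (-(deriv f L)))) := by
  have hA : A ≠ 0 := by rintro rfl; simp [hf] at h0
  have hcos0 : cos φ ≠ 0 := fun h => h0 (by rw [hf, mul_zero, add_zero, h, mul_zero])
  have hcosL : cos (φ + k * L) ≠ 0 := fun h => hLend (by rw [hf, h, mul_zero])
  have hderiv : ∀ x, deriv f x = -(A * k) * sin (φ + k * x) := fun x => by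
    rw [funext hf, deriv_const_mul_cos_affine]
  have hZ : {x ∈ Ioo 0 L | f x = 0} = {x ∈ Ioo 0 L | ∃ n : ℤ, φ + k * x = (n + 1 / 2) * π} := by
    simp only [hf, mul_eq_zero, hA, false_or, cos_eq_zero_iff_exists_eq_add_half_mul_pi]
  have hW : {x ∈ Ioo 0 L | deriv f x = 0} = {x ∈ Ioo 0 L | ∃ n : ℤ, φ + k * x = (n + 0) * π} := by
    simp only [hderiv, mul_eq_zero, neg_eq_zero, hA, hk.ne', or_self, false_or,
      add_zero, sin_eq_zero_iff_exists_eq_int_mul_pi]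
  have hL0 : 0 < L := (div_pos two_pi_pos hk).trans hL
  have hgap : φ / π + 2 < (φ + k * L) / π := by
    rw [div_lt_iff₀ hk] at hL
    rw [add_div, add_lt_add_iff_left, lt_div_iff₀ pi_pos]
    linarith
  have hZcard := ncard_setOf_affine_mem_lattice φ L (1 / 2) hk hL0
  have hWcard := ncard_setOf_affine_mem_lattice φ L 0 hk hL0
  simp only [sub_zero] at hWcard
  rw [hZ, hW]
  refine ⟨finite_setOf_affine_mem_lattice φ L _ hk, finite_setOf_affine_mem_lattice φ L _ hk,
    ?_, ?_, ?_⟩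
  · have := two_le_ceil_sub_floor_sub_one (a := φ / π - 1 / 2) (b := (φ + k * L) / π - 1 / 2)
      (by linarith)
    omega
  · have := two_le_ceil_sub_floor_sub_one hgap
    omega
  have hc : 0 < A ^ 2 * k / 2 := by positivity
  have hprod0 : f 0 * deriv f 0 = A ^ 2 * k / 2 * -sin (2 * φ) := by
    rw [hf, hderiv, mul_zero, add_zero, sin_two_mul]
    ring
  have hprodL : f L * -deriv f L = A ^ 2 * k / 2 * sin (2 * (φ + k * L)) := by
    rw [hf, hderiv, sin_two_mul]
    ring
  rw [hprod0, hprodL, sgn_mul_of_pos hc, sgn_mul_of_pos hc, ← Int.cast_natCast, hZcard,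
    ← Int.cast_natCast, hWcard, ← Int.cast_sub,
    two_mul_sub_floor_ceil_eq_neg_sgn_add_sgn hcos0 hcosL]
end

section
/- Suppose g : X → ℝ is a bounded Borel measurable function whose set of discontinuity points has μ-measure zero. Then lim_{N→∞} (1/N) Σ_{n=1}^N g(x_n) = ∫_X g dμ. -/
open MeasureTheory Filter

/-- One-sided key lemma: the averages are eventually bigger than `∫ g - ε`. -/
lemma key_lower {X : Type*} [MetricSpace X] [CompactSpace X]
    [MeasurableSpace X] [BorelSpace X]
    (μ : Measure X) [IsProbabilityMeasure μ] (x : ℕ → X)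
    (hequi : ∀ f : X → ℝ, Continuous f →
      Tendsto (fun N : ℕ => (∑ n ∈ Finset.Icc 1 N, f (x n)) / N) atTop
        (nhds (∫ a, f a ∂μ)))
    (g : X → ℝ) (C : ℝ) (hC : ∀ y, |g y| ≤ C)
    (hgd : μ {y | ¬ ContinuousAt g y} = 0) (ε : ℝ) (hε : 0 < ε) :
    ∀ᶠ N : ℕ in atTop, (∫ a, g a ∂μ) - ε < (∑ n ∈ Finset.Icc 1 N, g (x n)) / N := by
  -- inf-convolution approximations
  have hXne : Nonempty X := by
    by_contra h
    rw [not_nonempty_iff] at h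
    have : μ Set.univ = 1 := measure_univ
    simp [Set.univ_eq_empty_iff.2 h] at this
  set F : ℕ → X → ℝ := fun k y => ⨅ z, (g z + k * dist y z) with hF
  have hbdd : ∀ (k : ℕ) (y : X), BddBelow (Set.range fun z => g z + k * dist y z) := by
    intro k y
    refine ⟨-C, ?_⟩
    rintro _ ⟨z, rfl⟩
    show -C ≤ g z + k * dist y z
    have h1 := (abs_le.1 (hC z)).1
    have h2 : (0:ℝ) ≤ (k:ℝ) * dist y z := by positivity
    linarith
  have hFle : ∀ (k : ℕ) (y : X), F k y ≤ g y := by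
    intro k y
    have := ciInf_le (hbdd k y) y
    simpa using this
  have hFge : ∀ (k : ℕ) (y : X), -C ≤ F k y := by
    intro k y
    refine le_ciInf fun z => ?_
    have h1 := (abs_le.1 (hC z)).1
    have h2 : (0:ℝ) ≤ (k:ℝ) * dist y z := by positivity
    linarith
  have hFlip : ∀ k : ℕ, ∀ y y' : X, F k y ≤ F k y' + k * dist y y' := by
    intro k y y'
    rw [← sub_le_iff_le_add]
    refine le_ciInf fun z => ?_
    rw [sub_le_iff_le_add]
    calc F k y ≤ g z + k * dist y z := ciInf_le (hbdd k y) z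
      _ ≤ g z + k * dist y' z + k * dist y y' := by
          have h1 : dist y z ≤ dist y y' + dist y' z := dist_triangle y y' z
          have h2 : (0:ℝ) ≤ k := Nat.cast_nonneg k
          nlinarith
  have hFcont : ∀ k : ℕ, Continuous (F k) := by
    intro k
    refine LipschitzWith.continuous (K := k) (LipschitzWith.of_dist_le_mul fun y y' => ?_)
    rw [Real.dist_eq, abs_sub_le_iff]
    constructor
    · have := hFlip k y y'
      simp only [NNReal.coe_natCast]
      linarith
    · have := hFlip k y' y
      rw [dist_comm y y']
      simp only [NNReal.coe_natCast]
      linarith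
  -- pointwise convergence at continuity points
  have htend : ∀ y : X, ContinuousAt g y →
      Tendsto (fun k : ℕ => F k y) atTop (nhds (g y)) := by
    intro y hy
    rw [Metric.tendsto_atTop]
    intro δ hδ
    obtain ⟨r, hr, hball⟩ := Metric.continuousAt_iff.1 hy (δ/2) (by linarith)
    refine ⟨⌈(g y + C)/r⌉₊, fun k hk => ?_⟩
    have hklb : (g y + C)/r ≤ (k:ℝ) := (Nat.ceil_le.1 hk).trans' le_rfl
    have hFyge : g y - δ/2 ≤ F k y := by
      refine le_ciInf fun z => ?_
      rcases lt_or_ge (dist z y) r with h | h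
      · have := hball h
        rw [Real.dist_eq, abs_lt] at this
        have : g y - δ/2 ≤ g z := by linarith
        have hd : 0 ≤ (k:ℝ) * dist y z := by positivity
        linarith
      · have h1 : (g y + C) ≤ (k:ℝ) * r := by
          rw [div_le_iff₀ hr] at hklb; linarith
        have h2 : (k:ℝ) * r ≤ (k:ℝ) * dist y z := by
          rw [dist_comm]
          exact mul_le_mul_of_nonneg_left h (Nat.cast_nonneg k)
        have := (abs_le.1 (hC z)).1
        nlinarith
    have := hFle k y
    rw [Real.dist_eq, abs_lt]
    constructor <;> linarith
  -- integral convergence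
  have hae : ∀ᵐ a ∂μ, ContinuousAt g a := ae_iff.2 hgd
  have hint : Tendsto (fun k : ℕ => ∫ a, F k a ∂μ) atTop (nhds (∫ a, g a ∂μ)) := by
    refine tendsto_integral_of_dominated_convergence (fun _ => C)
      (fun k => ((hFcont k).aestronglyMeasurable)) (integrable_const C)
      (fun k => ae_of_all μ fun a => ?_) ?_
    · rw [Real.norm_eq_abs, abs_le]
      refine ⟨hFge k a, (hFle k a).trans ((abs_le.1 (hC a)).2)⟩
    · exact hae.mono fun a ha => htend a ha
  -- choose a good k
  obtain ⟨k, hk⟩ := (hint.eventually (eventually_gt_nhds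
    (show (∫ a, g a ∂μ) - ε/2 < ∫ a, g a ∂μ by linarith))).exists
  -- use equidistribution for F k
  have hek := hequi (F k) (hFcont k)
  have h1 : ∀ᶠ N : ℕ in atTop,
      (∫ a, g a ∂μ) - ε < (∑ n ∈ Finset.Icc 1 N, F k (x n)) / N := by
    refine hek.eventually (eventually_gt_nhds ?_)
    linarith
  filter_upwards [h1] with N hN
  refine hN.trans_le ?_
  gcongr with n hn
  exact hFle k (x n)

/-- If `(x n)` is equidistributed in a compact metric space with respect to a Borel
probability measure `μ`, and `g` is a bounded Borel measurable function whose set of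
discontinuity points has `μ`-measure zero, then the Birkhoff-type averages of `g` along the
sequence converge to `∫ g dμ`. -/
theorem stmt_2 {X : Type*} [MetricSpace X] [CompactSpace X]
    [MeasurableSpace X] [BorelSpace X]
    (μ : Measure X) [IsProbabilityMeasure μ] (x : ℕ → X)
    (hequi : ∀ f : X → ℝ, Continuous f →
      Tendsto (fun N : ℕ => (∑ n ∈ Finset.Icc 1 N, f (x n)) / N) atTop
        (nhds (∫ a, f a ∂μ)))
    (g : X → ℝ) (hgb : ∃ C : ℝ, ∀ y, |g y| ≤ C) (hgm : Measurable g)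
    (hgd : μ {y | ¬ ContinuousAt g y} = 0) :
    Tendsto (fun N : ℕ => (∑ n ∈ Finset.Icc 1 N, g (x n)) / N) atTop
      (nhds (∫ a, g a ∂μ)) := by
  obtain ⟨C, hC⟩ := hgb
  have hnegd : μ {y | ¬ ContinuousAt (fun a => -g a) y} = 0 := by
    have : {y | ¬ ContinuousAt (fun a => -g a) y} = {y | ¬ ContinuousAt g y} := by
      ext y
      simp only [Set.mem_setOf_eq, not_iff_not]
      constructor
      · intro h
        simpa only [Pi.neg_def, neg_neg] using h.neg
      · intro h
        exact h.neg
    rw [this]; exact hgd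
  rw [tendsto_order]
  constructor
  · intro a ha
    have := key_lower μ x hequi g C hC hgd ((∫ a, g a ∂μ) - a) (by linarith)
    filter_upwards [this] with N hN
    linarith
  · intro a ha
    have := key_lower μ x hequi (fun y => -g y) C
      (fun y => by simpa using hC y) hnegd (a - ∫ a, g a ∂μ) (by linarith)
    filter_upwards [this] with N hN
    rw [integral_neg] at hN
    have hsum : (∑ n ∈ Finset.Icc 1 N, -g (x n)) = -∑ n ∈ Finset.Icc 1 N, g (x n) :=
      Finset.sum_neg_distrib _
    rw [hsum, neg_div] at hN
    linarith
end

section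
/- Let g : X → ℝ be a Borel measurable function whose set of discontinuity points has μ-measure zero. Assume that for every Borel set B ⊆ ℝ the natural density d_g(B) := d({n ∈ ℕ : g(x_n) ∈ B}) exists, and that the set function B ↦ d_g(B) is countably additive on the Borel σ-algebra of ℝ. Then there exists a Borel set X' ⊆ X with μ(X') = 1 such that the image g(X') is countable. -/
open MeasureTheory Filter Set

section
variable {X : Type*} [MetricSpace X] [CompactSpace X] [MeasurableSpace X] [BorelSpace X]

/-- Sup-convolution basic facts -/
lemma supconv_facts [Nonempty X] (h : X → ℝ) (M : ℝ) (hb : ∀ y, |h y| ≤ M) (k : ℕ) :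
    (∀ y, h y ≤ ⨆ z, (h z - (k:ℝ) * dist y z)) ∧
    (∀ y, (⨆ z, (h z - (k:ℝ) * dist y z)) ≤ M) ∧
    Continuous (fun y => ⨆ z, (h z - (k:ℝ) * dist y z)) := by
  have hbdd : ∀ y : X, BddAbove (range fun z => h z - (k:ℝ) * dist y z) := by
    intro y
    refine ⟨M, ?_⟩
    rintro _ ⟨z, rfl⟩
    simp only
    have := (abs_le.1 (hb z)).2
    linarith [mul_nonneg (Nat.cast_nonneg (α := ℝ) k) (dist_nonneg (x := y) (y := z))]
  refine ⟨?_, ?_, ?_⟩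
  · intro y
    have := le_ciSup (hbdd y) y
    simpa using this
  · intro y
    refine ciSup_le fun z => ?_
    have h1 := (abs_le.1 (hb z)).2
    linarith [mul_nonneg (Nat.cast_nonneg (α := ℝ) k) (dist_nonneg (x := y) (y := z))]
  · have key : ∀ y y' : X, (⨆ z, (h z - (k:ℝ) * dist y z)) ≤
        (⨆ z, (h z - (k:ℝ) * dist y' z)) + (k:ℝ) * dist y y' := by
      intro y y'
      refine ciSup_le fun z => ?_
      have h1 : dist y z ≥ dist y' z - dist y y' := by
        have := dist_triangle y' y z
        rw [dist_comm y' y] at this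
        linarith
      have h2 : (k:ℝ) * (dist y' z - dist y y') ≤ (k:ℝ) * dist y z :=
        mul_le_mul_of_nonneg_left h1 (Nat.cast_nonneg k)
      have h3 : h z - (k:ℝ) * dist y' z ≤ ⨆ z, (h z - (k:ℝ) * dist y' z) :=
        le_ciSup (hbdd y') z
      linarith [mul_sub (k:ℝ) (dist y' z) (dist y y')]
    have : LipschitzWith k (fun y => ⨆ z, (h z - (k:ℝ) * dist y z)) := by
      rw [lipschitzWith_iff_dist_le_mul]
      intro y y'
      rw [Real.dist_eq, abs_sub_le_iff]
      constructor
      · have := key y y'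
        rw [dist_comm y y'] at this ⊢
        push_cast
        linarith
      · have := key y' y
        rw [dist_comm y' y] at this
        push_cast
        linarith
    exact this.continuous

lemma avg_limsup_le (μ : Measure X) [IsProbabilityMeasure μ] (x : ℕ → X)
    (hequi : ∀ f : X → ℝ, Continuous f →
      Tendsto (fun N : ℕ => (∑ n ∈ Finset.Icc 1 N, f (x n)) / N) atTop
        (nhds (∫ a, f a ∂μ)))
    (h : X → ℝ) (hm : Measurable h) (M : ℝ) (hb : ∀ y, |h y| ≤ M)
    (hd : μ {y | ¬ ContinuousAt h y} = 0) :
    limsup (fun N : ℕ => (∑ n ∈ Finset.Icc 1 N, h (x n)) / N) atTop ≤ ∫ a, h a ∂μ := by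
  obtain ⟨y0, -⟩ : (Set.univ : Set X).Nonempty := by
    apply nonempty_of_measure_ne_zero (μ := μ)
    simp
  have hne : Nonempty X := ⟨y0⟩
  have hM0 : 0 ≤ M := le_trans (abs_nonneg _) (hb y0)
  set F : ℕ → X → ℝ := fun k y => ⨆ z, (h z - (k:ℝ) * dist y z) with hF
  have hFle : ∀ k y, h y ≤ F k y := fun k => (supconv_facts h M hb k).1
  have hFM : ∀ k y, F k y ≤ M := fun k => (supconv_facts h M hb k).2.1
  have hFc : ∀ k, Continuous (F k) := fun k => (supconv_facts h M hb k).2.2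
  have hFabs : ∀ k y, |F k y| ≤ M := by
    intro k y
    rw [abs_le]
    exact ⟨le_trans (neg_le_of_abs_le (hb y)) (hFle k y), hFM k y⟩
  -- pointwise convergence at continuity points
  have hFtend : ∀ y, ContinuousAt h y → Tendsto (fun k => F k y) atTop (nhds (h y)) := by
    intro y hy
    rw [tendsto_order]
    constructor
    · intro b hb'
      exact Eventually.of_forall fun k => lt_of_lt_of_le hb' (hFle k y)
    · intro b hb'
      set ε := b - h y with hε
      have hε0 : 0 < ε := by simp [hε]; linarith
      obtain ⟨δ, hδ0, hδ⟩ := Metric.continuousAt_iff.1 hy (ε/2) (by linarith)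
      filter_upwards [eventually_ge_atTop (Nat.ceil (2*M/δ))] with k hk
      have hk' : 2*M/δ ≤ (k:ℝ) := le_trans (Nat.le_ceil _) (by exact_mod_cast hk)
      have : F k y ≤ h y + ε/2 := by
        refine ciSup_le fun z => ?_
        rcases lt_or_ge (dist y z) δ with hlt | hge
        · have := hδ (show dist z y < δ by rwa [dist_comm])
          rw [Real.dist_eq, abs_lt] at this
          have hnn : 0 ≤ (k:ℝ) * dist y z :=
            mul_nonneg (Nat.cast_nonneg k) dist_nonneg
          linarith
        · have h1 : 2*M ≤ (k:ℝ) * dist y z := by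
            calc 2*M = (2*M/δ) * δ := by field_simp
            _ ≤ (k:ℝ) * δ := mul_le_mul_of_nonneg_right hk' (le_of_lt hδ0)
            _ ≤ (k:ℝ) * dist y z := mul_le_mul_of_nonneg_left hge (Nat.cast_nonneg k)
          have h2 := (abs_le.1 (hb z)).2
          have h3 := neg_le_of_abs_le (hb y)
          linarith
      linarith
  -- integral convergence
  have hint : Integrable h μ := by
    refine ⟨hm.aestronglyMeasurable, ?_⟩
    apply MeasureTheory.HasFiniteIntegral.of_bounded (C := M)
    exact Eventually.of_forall fun y => by simpa [Real.norm_eq_abs] using hb y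
  have hconv : Tendsto (fun k => ∫ a, F k a ∂μ) atTop (nhds (∫ a, h a ∂μ)) := by
    apply MeasureTheory.tendsto_integral_of_dominated_convergence (fun _ => M)
    · exact fun k => (hFc k).aestronglyMeasurable
    · exact integrable_const M
    · exact fun k => Eventually.of_forall fun y => by
        simpa [Real.norm_eq_abs] using hFabs k y
    · have : ∀ᵐ y ∂μ, ContinuousAt h y := by
        rw [ae_iff]
        exact hd
      filter_upwards [this] with y hy
      exact hFtend y hy
  -- averages bounded
  have habs : ∀ N : ℕ, |(∑ n ∈ Finset.Icc 1 N, h (x n)) / N| ≤ M := by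
    intro N
    rcases Nat.eq_zero_or_pos N with rfl | hN
    · simpa using hM0
    · rw [abs_div, abs_of_nonneg (Nat.cast_nonneg (α := ℝ) N)]
      rw [div_le_iff₀ (by exact_mod_cast hN)]
      calc |∑ n ∈ Finset.Icc 1 N, h (x n)| ≤ ∑ n ∈ Finset.Icc 1 N, |h (x n)| :=
            Finset.abs_sum_le_sum_abs _ _
        _ ≤ ∑ _n ∈ Finset.Icc 1 N, M := Finset.sum_le_sum fun n _ => hb (x n)
        _ = (N : ℝ) * M := by
            rw [Finset.sum_const, Nat.card_Icc]
            simp [mul_comm]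
        _ = M * N := mul_comm _ _
  -- per-k bound
  have hperk : ∀ k : ℕ,
      limsup (fun N : ℕ => (∑ n ∈ Finset.Icc 1 N, h (x n)) / N) atTop ≤ ∫ a, F k a ∂μ := by
    intro k
    have h1 := hequi (F k) (hFc k)
    have h2 : limsup (fun N : ℕ => (∑ n ∈ Finset.Icc 1 N, h (x n)) / N) atTop ≤
        limsup (fun N : ℕ => (∑ n ∈ Finset.Icc 1 N, F k (x n)) / N) atTop := by
      apply limsup_le_limsup
      · apply Eventually.of_forall
        intro N
        simp only
        rw [div_eq_mul_inv, div_eq_mul_inv]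
        exact mul_le_mul_of_nonneg_right
          (Finset.sum_le_sum fun n _ => hFle k (x n))
          (inv_nonneg.2 (Nat.cast_nonneg N))
      · exact Filter.isCoboundedUnder_le_of_le atTop (x := -M)
          (fun N => neg_le_of_abs_le (habs N))
      · exact h1.isBoundedUnder_le
    rw [h1.limsup_eq] at h2
    exact h2
  exact ge_of_tendsto hconv (Eventually.of_forall hperk)

lemma ncard_eq_sum_indicator {X : Type*} (x : ℕ → X) (g : X → ℝ) (B : Set ℝ) (N : ℕ) :
    (({n : ℕ | 1 ≤ n ∧ n ≤ N ∧ g (x n) ∈ B}.ncard : ℝ)) =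
      ∑ n ∈ Finset.Icc 1 N, Set.indicator B (fun _ => (1:ℝ)) (g (x n)) := by
  classical
  have hset : {n : ℕ | 1 ≤ n ∧ n ≤ N ∧ g (x n) ∈ B} =
      ↑((Finset.Icc 1 N).filter (fun n => g (x n) ∈ B)) := by
    ext n
    simp [Finset.mem_Icc, and_assoc]
  rw [hset, Set.ncard_coe_finset]
  rw [Finset.card_filter]
  push_cast
  refine Finset.sum_congr rfl fun n _ => ?_
  by_cases hn : g (x n) ∈ B <;> simp [Set.indicator_apply, hn]

variable {μ : Measure X} [IsProbabilityMeasure μ] {x : ℕ → X}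
  {g : X → ℝ} {dg : Set ℝ → ℝ}

lemma dg_le_integral
    (hequi : ∀ f : X → ℝ, Continuous f →
      Tendsto (fun N : ℕ => (∑ n ∈ Finset.Icc 1 N, f (x n)) / N) atTop
        (nhds (∫ a, f a ∂μ)))
    (hgm : Measurable g) (hgd : μ {y | ¬ ContinuousAt g y} = 0)
    (hdg : ∀ B : Set ℝ, MeasurableSet B →
      Tendsto (fun N : ℕ => (({n : ℕ | 1 ≤ n ∧ n ≤ N ∧ g (x n) ∈ B}.ncard : ℝ)) / N) atTop
        (nhds (dg B)))
    (B : Set ℝ) (hB : MeasurableSet B) (φ : ℝ → ℝ) (hφc : Continuous φ)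
    (hφ0 : ∀ s, 0 ≤ φ s) (hφ1 : ∀ s, φ s ≤ 1)
    (hind : ∀ s, Set.indicator B (fun _ => (1:ℝ)) s ≤ φ s) :
    dg B ≤ ∫ a, φ (g a) ∂μ := by
  have hm : Measurable (fun a => φ (g a)) := hφc.measurable.comp hgm
  have hb : ∀ y, |φ (g y)| ≤ 1 := fun y => abs_le.2 ⟨by linarith [hφ0 (g y)], hφ1 (g y)⟩
  have hd : μ {y | ¬ ContinuousAt (fun a => φ (g a)) y} = 0 := by
    refine measure_mono_null ?_ hgd
    intro y hy
    simp only [Set.mem_setOf_eq] at hy ⊢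
    intro hgy
    exact hy (hφc.continuousAt.comp hgy)
  have hls := avg_limsup_le μ x hequi (fun a => φ (g a)) hm 1 hb hd
  have htd := hdg B hB
  have hcount : ∀ N : ℕ, (({n : ℕ | 1 ≤ n ∧ n ≤ N ∧ g (x n) ∈ B}.ncard : ℝ)) / N ≤
      (∑ n ∈ Finset.Icc 1 N, φ (g (x n))) / N := by
    intro N
    rw [ncard_eq_sum_indicator, div_eq_mul_inv, div_eq_mul_inv]
    exact mul_le_mul_of_nonneg_right
      (Finset.sum_le_sum fun n _ => hind (g (x n)))
      (inv_nonneg.2 (Nat.cast_nonneg N))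
  have h1 : dg B = limsup (fun N : ℕ =>
      (({n : ℕ | 1 ≤ n ∧ n ≤ N ∧ g (x n) ∈ B}.ncard : ℝ)) / N) atTop := (htd.limsup_eq).symm
  rw [h1]
  refine le_trans (limsup_le_limsup (Eventually.of_forall hcount) ?_ ?_) hls
  · exact Filter.isCoboundedUnder_le_of_le atTop (x := 0)
      (fun N => div_nonneg (Nat.cast_nonneg _) (Nat.cast_nonneg _))
  · refine Filter.isBoundedUnder_of ⟨1, fun N => ?_⟩
    rcases Nat.eq_zero_or_pos N with rfl | hN
    · simp
    · rw [div_le_one (by exact_mod_cast hN)]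
      calc (∑ n ∈ Finset.Icc 1 N, φ (g (x n))) ≤ ∑ _n ∈ Finset.Icc 1 N, (1:ℝ) :=
            Finset.sum_le_sum fun n _ => hφ1 _
        _ = (N:ℝ) := by rw [Finset.sum_const, Nat.card_Icc]; simp

lemma integral_le_dg
    (hequi : ∀ f : X → ℝ, Continuous f →
      Tendsto (fun N : ℕ => (∑ n ∈ Finset.Icc 1 N, f (x n)) / N) atTop
        (nhds (∫ a, f a ∂μ)))
    (hgm : Measurable g) (hgd : μ {y | ¬ ContinuousAt g y} = 0)
    (hdg : ∀ B : Set ℝ, MeasurableSet B →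
      Tendsto (fun N : ℕ => (({n : ℕ | 1 ≤ n ∧ n ≤ N ∧ g (x n) ∈ B}.ncard : ℝ)) / N) atTop
        (nhds (dg B)))
    (B : Set ℝ) (hB : MeasurableSet B) (φ : ℝ → ℝ) (hφc : Continuous φ)
    (hφ0 : ∀ s, 0 ≤ φ s) (hφ1 : ∀ s, φ s ≤ 1)
    (hind : ∀ s, φ s ≤ Set.indicator B (fun _ => (1:ℝ)) s) :
    ∫ a, φ (g a) ∂μ ≤ dg B := by
  have hm : Measurable (fun a => -φ (g a)) := (hφc.measurable.comp hgm).neg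
  have hb : ∀ y, |(-φ (g y))| ≤ 1 := fun y => by
    rw [abs_neg]
    exact abs_le.2 ⟨by linarith [hφ0 (g y)], hφ1 (g y)⟩
  have hd : μ {y | ¬ ContinuousAt (fun a => -φ (g a)) y} = 0 := by
    refine measure_mono_null ?_ hgd
    intro y hy
    simp only [Set.mem_setOf_eq] at hy ⊢
    intro hgy
    exact hy ((hφc.continuousAt.comp hgy).neg)
  have hls := avg_limsup_le μ x hequi (fun a => -φ (g a)) hm 1 hb hd
  have htd := (hdg B hB).neg
  have hcount : ∀ N : ℕ, -((({n : ℕ | 1 ≤ n ∧ n ≤ N ∧ g (x n) ∈ B}.ncard : ℝ)) / N) ≤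
      (∑ n ∈ Finset.Icc 1 N, -φ (g (x n))) / N := by
    intro N
    rw [ncard_eq_sum_indicator, Finset.sum_neg_distrib, ← neg_div,
      div_eq_mul_inv, div_eq_mul_inv, neg_mul, neg_mul, neg_le_neg_iff]
    exact mul_le_mul_of_nonneg_right
      (Finset.sum_le_sum fun n _ => hind (g (x n)))
      (inv_nonneg.2 (Nat.cast_nonneg N))
  have h1 : -dg B = limsup (fun N : ℕ =>
      -((({n : ℕ | 1 ≤ n ∧ n ≤ N ∧ g (x n) ∈ B}.ncard : ℝ)) / N)) atTop := (htd.limsup_eq).symm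
  have h2 : -dg B ≤ ∫ a, -φ (g a) ∂μ := by
    rw [h1]
    refine le_trans (limsup_le_limsup (Eventually.of_forall hcount) ?_ ?_) hls
    · exact Filter.isCoboundedUnder_le_of_le atTop (x := -1) (fun N => by
        rcases Nat.eq_zero_or_pos N with rfl | hN
        · simp
        · rw [neg_le, neg_neg, div_le_one (by exact_mod_cast hN)]
          rw [ncard_eq_sum_indicator]
          calc (∑ n ∈ Finset.Icc 1 N, Set.indicator B (fun _ => (1:ℝ)) (g (x n)))
              ≤ ∑ _n ∈ Finset.Icc 1 N, (1:ℝ) := Finset.sum_le_sum fun n _ => by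
                by_cases hn : g (x n) ∈ B <;> simp [Set.indicator_apply, hn]
            _ = (N:ℝ) := by rw [Finset.sum_const, Nat.card_Icc]; simp)
    · refine Filter.isBoundedUnder_of ⟨0, fun N => ?_⟩
      apply div_nonpos_of_nonpos_of_nonneg _ (Nat.cast_nonneg N)
      apply Finset.sum_nonpos fun n _ => neg_nonpos.2 (hφ0 _)
  rw [integral_neg] at h2
  linarith

lemma dg_Iic_le
    (hequi : ∀ f : X → ℝ, Continuous f →
      Tendsto (fun N : ℕ => (∑ n ∈ Finset.Icc 1 N, f (x n)) / N) atTop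
        (nhds (∫ a, f a ∂μ)))
    (hgm : Measurable g) (hgd : μ {y | ¬ ContinuousAt g y} = 0)
    (hdg : ∀ B : Set ℝ, MeasurableSet B →
      Tendsto (fun N : ℕ => (({n : ℕ | 1 ≤ n ∧ n ≤ N ∧ g (x n) ∈ B}.ncard : ℝ)) / N) atTop
        (nhds (dg B)))
    (t δ : ℝ) (hδ : 0 < δ) :
    dg (Set.Iic t) ≤ (μ (g ⁻¹' Set.Iic (t + δ))).toReal := by
  set φ : ℝ → ℝ := fun s => max 0 (min 1 ((t + δ - s)/δ)) with hφ
  have hφc : Continuous φ :=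
    continuous_const.max (continuous_const.min ((continuous_const.sub continuous_id).div_const δ))
  have hφ0 : ∀ s, 0 ≤ φ s := fun s => le_max_left _ _
  have hφ1 : ∀ s, φ s ≤ 1 := fun s => max_le zero_le_one (min_le_left _ _)
  have hind : ∀ s, Set.indicator (Set.Iic t) (fun _ => (1:ℝ)) s ≤ φ s := by
    intro s
    by_cases hs : s ∈ Set.Iic t
    · rw [Set.indicator_of_mem hs]
      have hr : 1 ≤ (t + δ - s)/δ := by
        rw [le_div_iff₀ hδ]
        simp only [Set.mem_Iic] at hs
        linarith
      have : min 1 ((t + δ - s)/δ) = 1 := min_eq_left hr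
      rw [hφ]
      simp only
      rw [this]
      exact le_max_right _ _
    · rw [Set.indicator_of_notMem hs]
      exact hφ0 s
  have h1 := dg_le_integral hequi hgm hgd hdg (Set.Iic t) measurableSet_Iic φ hφc hφ0 hφ1 hind
  refine h1.trans ?_
  have hφle : ∀ a : X, φ (g a) ≤ Set.indicator (g ⁻¹' Set.Iic (t + δ)) (fun _ => (1:ℝ)) a := by
    intro a
    by_cases hs : a ∈ g ⁻¹' Set.Iic (t + δ)
    · rw [Set.indicator_of_mem hs]
      exact hφ1 _
    · rw [Set.indicator_of_notMem hs]
      simp only [Set.mem_preimage, Set.mem_Iic, not_le] at hs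
      have hr : (t + δ - g a)/δ ≤ 0 := div_nonpos_of_nonpos_of_nonneg (by linarith) hδ.le
      rw [hφ]
      simp only
      rw [min_eq_right (hr.trans zero_le_one), max_eq_left hr]
  have hintφ : Integrable (fun a => φ (g a)) μ := by
    refine ⟨(hφc.measurable.comp hgm).aestronglyMeasurable, ?_⟩
    apply MeasureTheory.HasFiniteIntegral.of_bounded (C := 1)
    refine Eventually.of_forall fun y => ?_
    rw [Real.norm_eq_abs, abs_le]
    exact ⟨by linarith [hφ0 (g y)], hφ1 (g y)⟩
  have hindint : Integrable (Set.indicator (g ⁻¹' Set.Iic (t + δ)) (fun _ => (1:ℝ))) μ :=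
    (integrable_const (1:ℝ)).indicator (hgm measurableSet_Iic)
  calc ∫ a, φ (g a) ∂μ ≤ ∫ a, Set.indicator (g ⁻¹' Set.Iic (t + δ)) (fun _ => (1:ℝ)) a ∂μ :=
        integral_mono hintφ hindint hφle
    _ = (μ (g ⁻¹' Set.Iic (t + δ))).toReal := integral_indicator_one (hgm measurableSet_Iic)

lemma le_dg_Iio
    (hequi : ∀ f : X → ℝ, Continuous f →
      Tendsto (fun N : ℕ => (∑ n ∈ Finset.Icc 1 N, f (x n)) / N) atTop
        (nhds (∫ a, f a ∂μ)))
    (hgm : Measurable g) (hgd : μ {y | ¬ ContinuousAt g y} = 0)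
    (hdg : ∀ B : Set ℝ, MeasurableSet B →
      Tendsto (fun N : ℕ => (({n : ℕ | 1 ≤ n ∧ n ≤ N ∧ g (x n) ∈ B}.ncard : ℝ)) / N) atTop
        (nhds (dg B)))
    (t δ : ℝ) (hδ : 0 < δ) :
    (μ (g ⁻¹' Set.Iic (t - δ))).toReal ≤ dg (Set.Iio t) := by
  set φ : ℝ → ℝ := fun s => max 0 (min 1 ((t - s)/δ)) with hφ
  have hφc : Continuous φ :=
    continuous_const.max (continuous_const.min ((continuous_const.sub continuous_id).div_const δ))
  have hφ0 : ∀ s, 0 ≤ φ s := fun s => le_max_left _ _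
  have hφ1 : ∀ s, φ s ≤ 1 := fun s => max_le zero_le_one (min_le_left _ _)
  have hind : ∀ s, φ s ≤ Set.indicator (Set.Iio t) (fun _ => (1:ℝ)) s := by
    intro s
    by_cases hs : s ∈ Set.Iio t
    · rw [Set.indicator_of_mem hs]
      exact hφ1 _
    · rw [Set.indicator_of_notMem hs]
      simp only [Set.mem_Iio, not_lt] at hs
      have hr : (t - s)/δ ≤ 0 := div_nonpos_of_nonpos_of_nonneg (by linarith) hδ.le
      rw [hφ]
      simp only
      rw [min_eq_right (hr.trans zero_le_one), max_eq_left hr]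
  have h1 := integral_le_dg hequi hgm hgd hdg (Set.Iio t) measurableSet_Iio φ hφc hφ0 hφ1 hind
  refine le_trans ?_ h1
  have hφge : ∀ a : X, Set.indicator (g ⁻¹' Set.Iic (t - δ)) (fun _ => (1:ℝ)) a ≤ φ (g a) := by
    intro a
    by_cases hs : a ∈ g ⁻¹' Set.Iic (t - δ)
    · rw [Set.indicator_of_mem hs]
      simp only [Set.mem_preimage, Set.mem_Iic] at hs
      have hr : 1 ≤ (t - g a)/δ := by
        rw [le_div_iff₀ hδ]
        linarith
      rw [hφ]
      simp only
      rw [min_eq_left hr]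
      exact le_max_right _ _
    · rw [Set.indicator_of_notMem hs]
      exact hφ0 _
  have hintφ : Integrable (fun a => φ (g a)) μ := by
    refine ⟨(hφc.measurable.comp hgm).aestronglyMeasurable, ?_⟩
    apply MeasureTheory.HasFiniteIntegral.of_bounded (C := 1)
    refine Eventually.of_forall fun y => ?_
    rw [Real.norm_eq_abs, abs_le]
    exact ⟨by linarith [hφ0 (g y)], hφ1 (g y)⟩
  have hindint : Integrable (Set.indicator (g ⁻¹' Set.Iic (t - δ)) (fun _ => (1:ℝ))) μ :=
    (integrable_const (1:ℝ)).indicator (hgm measurableSet_Iic)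
  calc (μ (g ⁻¹' Set.Iic (t - δ))).toReal
      = ∫ a, Set.indicator (g ⁻¹' Set.Iic (t - δ)) (fun _ => (1:ℝ)) a ∂μ :=
        (integral_indicator_one (hgm measurableSet_Iic)).symm
    _ ≤ ∫ a, φ (g a) ∂μ := integral_mono hindint hintφ hφge

lemma dg_singleton_le
    (hequi : ∀ f : X → ℝ, Continuous f →
      Tendsto (fun N : ℕ => (∑ n ∈ Finset.Icc 1 N, f (x n)) / N) atTop
        (nhds (∫ a, f a ∂μ)))
    (hgm : Measurable g) (hgd : μ {y | ¬ ContinuousAt g y} = 0)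
    (hdg : ∀ B : Set ℝ, MeasurableSet B →
      Tendsto (fun N : ℕ => (({n : ℕ | 1 ≤ n ∧ n ≤ N ∧ g (x n) ∈ B}.ncard : ℝ)) / N) atTop
        (nhds (dg B)))
    (t : ℝ) :
    dg {t} ≤ (μ (g ⁻¹' {t})).toReal := by
  -- upper bound for dg (Iic t)
  have hIic : dg (Set.Iic t) ≤ (μ (g ⁻¹' Set.Iic t)).toReal := by
    have hmono : Antitone (fun k : ℕ => g ⁻¹' Set.Iic (t + 1/((k:ℝ)+1))) := by
      intro k l hkl
      apply Set.preimage_mono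
      intro s hs
      simp only [Set.mem_Iic] at hs ⊢
      have : 1/((l:ℝ)+1) ≤ 1/((k:ℝ)+1) := by
        apply one_div_le_one_div_of_le (by positivity)
        have := (Nat.cast_le (α := ℝ)).2 hkl
        linarith
      linarith
    have hiInter : (⋂ k : ℕ, g ⁻¹' Set.Iic (t + 1/((k:ℝ)+1))) = g ⁻¹' Set.Iic t := by
      ext a
      simp only [Set.mem_iInter, Set.mem_preimage, Set.mem_Iic]
      constructor
      · intro h
        by_contra hc
        push_neg at hc
        obtain ⟨k, hk⟩ := exists_nat_one_div_lt (sub_pos.2 hc)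
        have := h k
        push_cast at hk ⊢
        linarith
      · intro h k
        have : (0:ℝ) < 1/((k:ℝ)+1) := by positivity
        linarith
    have htends := tendsto_measure_iInter_atTop (μ := μ)
      (fun k => (hgm measurableSet_Iic).nullMeasurableSet) hmono ⟨0, measure_ne_top μ _⟩
    rw [hiInter] at htends
    have htoReal : Tendsto (fun k : ℕ => (μ (g ⁻¹' Set.Iic (t + 1/((k:ℝ)+1)))).toReal) atTop
        (nhds (μ (g ⁻¹' Set.Iic t)).toReal) :=
      (ENNReal.tendsto_toReal (measure_ne_top μ _)).comp htends
    refine ge_of_tendsto htoReal (Eventually.of_forall fun k => ?_)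
    exact dg_Iic_le hequi hgm hgd hdg t (1/((k:ℝ)+1)) (by positivity)
  -- lower bound for dg (Iio t)
  have hIio : (μ (g ⁻¹' Set.Iio t)).toReal ≤ dg (Set.Iio t) := by
    have hmono : Monotone (fun k : ℕ => g ⁻¹' Set.Iic (t - 1/((k:ℝ)+1))) := by
      intro k l hkl
      apply Set.preimage_mono
      intro s hs
      simp only [Set.mem_Iic] at hs ⊢
      have : 1/((l:ℝ)+1) ≤ 1/((k:ℝ)+1) := by
        apply one_div_le_one_div_of_le (by positivity)
        have := (Nat.cast_le (α := ℝ)).2 hkl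
        linarith
      linarith
    have hiUnion : (⋃ k : ℕ, g ⁻¹' Set.Iic (t - 1/((k:ℝ)+1))) = g ⁻¹' Set.Iio t := by
      ext a
      simp only [Set.mem_iUnion, Set.mem_preimage, Set.mem_Iic, Set.mem_Iio]
      constructor
      · rintro ⟨k, hk⟩
        have : (0:ℝ) < 1/((k:ℝ)+1) := by positivity
        linarith
      · intro h
        obtain ⟨k, hk⟩ := exists_nat_one_div_lt (sub_pos.2 h)
        exact ⟨k, by push_cast at hk ⊢; linarith⟩
    have htends := tendsto_measure_iUnion_atTop (μ := μ) hmono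
    rw [hiUnion] at htends
    have htoReal : Tendsto (fun k : ℕ => (μ (g ⁻¹' Set.Iic (t - 1/((k:ℝ)+1)))).toReal) atTop
        (nhds (μ (g ⁻¹' Set.Iio t)).toReal) :=
      (ENNReal.tendsto_toReal (measure_ne_top μ _)).comp htends
    refine le_of_tendsto htoReal (Eventually.of_forall fun k => ?_)
    exact le_dg_Iio hequi hgm hgd hdg t (1/((k:ℝ)+1)) (by positivity)
  -- additivity of dg on Iic = Iio ∪ {t}
  have hdgadd : dg (Set.Iic t) = dg (Set.Iio t) + dg {t} := by
    have h1 := (hdg (Set.Iio t) measurableSet_Iio).add (hdg {t} (measurableSet_singleton t))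
    have h2 : (fun N : ℕ =>
        (({n : ℕ | 1 ≤ n ∧ n ≤ N ∧ g (x n) ∈ Set.Iio t}.ncard : ℝ)) / N +
        (({n : ℕ | 1 ≤ n ∧ n ≤ N ∧ g (x n) ∈ ({t} : Set ℝ)}.ncard : ℝ)) / N) =
        (fun N : ℕ => (({n : ℕ | 1 ≤ n ∧ n ≤ N ∧ g (x n) ∈ Set.Iic t}.ncard : ℝ)) / N) := by
      funext N
      rw [ncard_eq_sum_indicator, ncard_eq_sum_indicator, ncard_eq_sum_indicator,
        ← add_div, ← Finset.sum_add_distrib]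
      congr 1
      refine Finset.sum_congr rfl fun n _ => ?_
      simp only [Set.indicator_apply, Set.mem_Iio, Set.mem_Iic, Set.mem_singleton_iff]
      rcases lt_trichotomy (g (x n)) t with h | h | h
      · simp [h, le_of_lt h, ne_of_lt h]
      · simp [h]
      · simp [not_lt.2 h.le, ne_of_gt h, not_le.2 h]
    rw [h2] at h1
    exact tendsto_nhds_unique (hdg (Set.Iic t) measurableSet_Iic) h1
  -- measure additivity
  have hμadd : (μ (g ⁻¹' Set.Iic t)).toReal =
      (μ (g ⁻¹' Set.Iio t)).toReal + (μ (g ⁻¹' {t})).toReal := by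
    have hdisj : Disjoint (g ⁻¹' Set.Iio t) (g ⁻¹' {t}) := by
      refine Set.disjoint_left.2 fun a ha ha' => ?_
      simp only [Set.mem_preimage, Set.mem_Iio, Set.mem_singleton_iff] at ha ha'
      rw [ha'] at ha
      exact lt_irrefl _ ha
    have hun : g ⁻¹' Set.Iic t = g ⁻¹' Set.Iio t ∪ g ⁻¹' {t} := by
      rw [← Set.preimage_union, Set.Iio_union_right]
    rw [hun, measure_union hdisj (hgm (measurableSet_singleton t)),
      ENNReal.toReal_add (measure_ne_top μ _) (measure_ne_top μ _)]
  linarith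
end

/-- If `(x n)` is equidistributed with respect to a Borel probability measure `μ` on a
compact metric space, `g : X → ℝ` is Borel measurable with discontinuity set of `μ`-measure
zero, the natural density `d_g B` of `{n : g (x n) ∈ B}` exists for every Borel `B ⊆ ℝ`,
and `B ↦ d_g B` is countably additive on Borel sets, then there is a Borel set `X' ⊆ X` of
full `μ`-measure whose image `g '' X'` is countable. -/
theorem stmt_6 {X : Type*} [MetricSpace X] [CompactSpace X]
    [MeasurableSpace X] [BorelSpace X]
    (μ : Measure X) [IsProbabilityMeasure μ] (x : ℕ → X)
    (hequi : ∀ f : X → ℝ, Continuous f →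
      Tendsto (fun N : ℕ => (∑ n ∈ Finset.Icc 1 N, f (x n)) / N) atTop
        (nhds (∫ a, f a ∂μ)))
    (g : X → ℝ) (hgm : Measurable g) (hgd : μ {y | ¬ ContinuousAt g y} = 0)
    (dg : Set ℝ → ℝ)
    (hdg : ∀ B : Set ℝ, MeasurableSet B →
      Tendsto (fun N : ℕ => (({n : ℕ | 1 ≤ n ∧ n ≤ N ∧ g (x n) ∈ B}.ncard : ℝ)) / N) atTop
        (nhds (dg B)))
    (hadd : ∀ B : ℕ → Set ℝ, (∀ i, MeasurableSet (B i)) →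
      Pairwise (Function.onFun Disjoint B) →
      HasSum (fun i => dg (B i)) (dg (⋃ i, B i))) :
    ∃ X' : Set X, MeasurableSet X' ∧ μ X' = 1 ∧ (g '' X').Countable := by
    classical
  set A : Set ℝ := Set.range (fun i : ℕ => g (x (i+1))) with hA
  have hAc : A.Countable := Set.countable_range _
  have hAm : MeasurableSet A := hAc.measurableSet
  set B : ℕ → Set ℝ := fun i =>
    {g (x (i+1))} \ (⋃ j, ⋃ (_ : j < i), {g (x (j+1))}) with hB
  have hBm : ∀ i, MeasurableSet (B i) := fun i =>
    (measurableSet_singleton _).diff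
      (MeasurableSet.iUnion fun j => MeasurableSet.iUnion fun _ => measurableSet_singleton _)
  have hBlt : ∀ i j, i < j → Disjoint (B i) (B j) := by
    intro i j hij
    refine Set.disjoint_left.2 fun a hai haj => ?_
    have ha : a = g (x (i+1)) := hai.1
    exact haj.2 (Set.mem_iUnion.2 ⟨i, Set.mem_iUnion.2 ⟨hij, ha⟩⟩)
  have hBdisj : Pairwise (Function.onFun Disjoint B) := by
    intro i j hij
    rcases hij.lt_or_gt with h | h
    · exact hBlt i j h
    · exact (hBlt j i h).symm
  have hBUnion : (⋃ i, B i) = A := by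
    apply Set.Subset.antisymm
    · exact Set.iUnion_subset fun i a ha => ⟨i, (Set.mem_singleton_iff.1 ha.1).symm⟩
    · rintro a ⟨i, hi⟩
      have hex : ∃ j, g (x (j+1)) = a := ⟨i, hi⟩
      set k := Nat.find hex with hk
      refine Set.mem_iUnion.2 ⟨k, ?_, ?_⟩
      · exact (Nat.find_spec hex).symm
      · intro hmem
        obtain ⟨j, hj⟩ := Set.mem_iUnion.1 hmem
        obtain ⟨hjk, hja⟩ := Set.mem_iUnion.1 hj
        have : g (x (j+1)) = a := by
          rw [Set.mem_singleton_iff] at hja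
          rw [hja]
        exact Nat.find_min hex hjk this
  have hsum : HasSum (fun i => dg (B i)) (dg A) := by
    have := hadd B hBm hBdisj
    rwa [hBUnion] at this
  -- dg A = 1
  have hdgA : dg A = 1 := by
    have h1 := hdg A hAm
    have h2 : Tendsto (fun N : ℕ =>
        (({n : ℕ | 1 ≤ n ∧ n ≤ N ∧ g (x n) ∈ A}.ncard : ℝ)) / N) atTop (nhds 1) := by
      apply Tendsto.congr' _ tendsto_const_nhds
      filter_upwards [eventually_ge_atTop 1] with N hN
      have hset : {n : ℕ | 1 ≤ n ∧ n ≤ N ∧ g (x n) ∈ A} = ↑(Finset.Icc 1 N) := by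
        ext n
        simp only [Set.mem_setOf_eq, Finset.coe_Icc, Set.mem_Icc]
        constructor
        · rintro ⟨h1', h2', _⟩; exact ⟨h1', h2'⟩
        · rintro ⟨h1', h2'⟩
          refine ⟨h1', h2', ?_⟩
          have hn : n - 1 + 1 = n := Nat.succ_pred_eq_of_pos h1'
          exact ⟨n - 1, by simp only [hn]⟩
      rw [hset, Set.ncard_coe_finset, Nat.card_Icc]
      have hN0 : (N:ℝ) ≠ 0 := by
        have : (0:ℕ) < N := hN
        exact_mod_cast this.ne'
      simp only [Nat.add_sub_cancel]
      rw [div_self hN0]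
    exact tendsto_nhds_unique h1 h2
  -- termwise bound
  have hterm : ∀ i, dg (B i) ≤ (μ (g ⁻¹' (B i))).toReal := by
    intro i
    by_cases hmem : g (x (i+1)) ∈ ⋃ j, ⋃ (_ : j < i), {g (x (j+1))}
    · have hBe : B i = ∅ := by
        rw [hB]
        simp only
        rw [Set.diff_eq_empty]
        intro a ha
        rw [Set.mem_singleton_iff] at ha
        rwa [ha]
      rw [hBe]
      have hdge : dg (∅ : Set ℝ) = 0 := by
        have h1 := hdg ∅ MeasurableSet.empty
        have h2 : Tendsto (fun N : ℕ =>
            (({n : ℕ | 1 ≤ n ∧ n ≤ N ∧ g (x n) ∈ (∅ : Set ℝ)}.ncard : ℝ)) / N) atTop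
            (nhds 0) := by
          have : ∀ N : ℕ, (({n : ℕ | 1 ≤ n ∧ n ≤ N ∧ g (x n) ∈ (∅ : Set ℝ)}.ncard : ℝ)) / N
              = 0 := by
            intro N
            have : {n : ℕ | 1 ≤ n ∧ n ≤ N ∧ g (x n) ∈ (∅ : Set ℝ)} = ∅ := by
              ext n; simp
            rw [this]
            simp
          simp only [this]
          exact tendsto_const_nhds
        exact tendsto_nhds_unique h1 h2
      rw [hdge]
      exact ENNReal.toReal_nonneg
    · have hBe : B i = {g (x (i+1))} := by
        rw [hB]
        simp only
        refine Set.Subset.antisymm Set.diff_subset fun a ha => ⟨ha, ?_⟩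
        rw [Set.mem_singleton_iff] at ha
        rw [ha]
        exact hmem
      rw [hBe]
      exact dg_singleton_le hequi hgm hgd hdg (g (x (i+1)))
  -- measure side sum
  have hμUnion : μ (g ⁻¹' A) = ∑' i, μ (g ⁻¹' (B i)) := by
    rw [← hBUnion, Set.preimage_iUnion]
    exact measure_iUnion (fun i j hij => (hBdisj hij).preimage g) (fun i => hgm (hBm i))
  have hνsum : HasSum (fun i => (μ (g ⁻¹' (B i))).toReal) ((μ (g ⁻¹' A)).toReal) := by
    have hne : (∑' i, μ (g ⁻¹' (B i))) ≠ ⊤ := by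
      rw [← hμUnion]
      exact measure_ne_top μ _
    have h := ENNReal.hasSum_toReal hne
    have heq : (μ (g ⁻¹' A)).toReal = ∑' i, (μ (g ⁻¹' (B i))).toReal := by
      rw [hμUnion, ← ENNReal.tsum_toReal_eq (fun i => measure_ne_top μ _)]
    rw [heq]
    exact h
  have hle : (1:ℝ) ≤ (μ (g ⁻¹' A)).toReal := by
    calc (1:ℝ) = dg A := hdgA.symm
      _ ≤ (μ (g ⁻¹' A)).toReal := hasSum_le hterm hsum hνsum
  have hμA : μ (g ⁻¹' A) = 1 := by
    have h1 : μ (g ⁻¹' A) ≤ 1 := prob_le_one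
    have h2 : (μ (g ⁻¹' A)).toReal ≤ 1 := by
      calc (μ (g ⁻¹' A)).toReal ≤ (1 : ENNReal).toReal :=
            ENNReal.toReal_mono (by simp) h1
        _ = 1 := by simp
    have h3 : (μ (g ⁻¹' A)).toReal = 1 := le_antisymm h2 hle
    rw [← ENNReal.ofReal_toReal (measure_ne_top μ _), h3]
    simp
  refine ⟨g ⁻¹' A, hgm hAm, hμA, ?_⟩
  exact hAc.mono (Set.image_preimage_subset g A)
end

section
/- Let d ≥ 1, let U ⊆ ℝ^d be a connected open set, and let g be real analytic on U and not constant on U. Then for every set B ⊆ ℝ of one-dimensional Lebesgue measure zero, the preimage {x ∈ U : g(x) ∈ B} has d-dimensional Lebesgue measure zero. -/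
/-!
Near a point where `dg ≠ 0` some partial derivative `∂ᵢg` is nonzero, and replacing the `i`-th
coordinate by `g` is, on a small ball, an injective map with Jacobian `∂ᵢg ≠ 0` sending the
preimage of `B` into the null slab `{u | u i ∈ B}`; by the change of variables inequality that
preimage is null. The critical set `{dg = 0}` is null since the zero set of an analytic map `Φ`
that does not vanish identically on a connected open set is null: at each zero some `Dⁿ Φ`
vanishes with nonzero derivative (otherwise `Φ` is flat there, hence zero by the identity
theorem), and the regular zeros of a `C¹` map are null by the first part, applied to its
coordinates.
-/

open MeasureTheory Set Filter Topology

theorem ContinuousOn.measurableSet_inter_preimage {α β : Type*} [TopologicalSpace α]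
    [MeasurableSpace α] [OpensMeasurableSpace α] [TopologicalSpace β] [MeasurableSpace β]
    [BorelSpace β] {f : α → β} {s : Set α} {t : Set β} (hf : ContinuousOn f s)
    (hs : MeasurableSet s) (ht : MeasurableSet t) : MeasurableSet (s ∩ f ⁻¹' t) := by
  have : s ∩ f ⁻¹' t = Subtype.val '' (s.domRestrict f ⁻¹' t) := by
    ext y
    simp [Set.domRestrict, and_comm]
  rw [this]
  exact hs.subtype_image ((continuousOn_iff_continuous_domRestrict.mp hf).measurable ht)

instance ContinuousMultilinearMap.finiteDimensional {ι 𝕜 : Type*} [Fintype ι] [RCLike 𝕜]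
    {E : ι → Type*} {F : Type*} [∀ i, NormedAddCommGroup (E i)] [∀ i, NormedSpace 𝕜 (E i)]
    [∀ i, FiniteDimensional 𝕜 (E i)] [NormedAddCommGroup F] [NormedSpace 𝕜 F]
    [FiniteDimensional 𝕜 F] : FiniteDimensional 𝕜 (ContinuousMultilinearMap 𝕜 E F) :=
  Module.Finite.of_injective (ContinuousMultilinearMap.toMultilinearMapLinear (R' := 𝕜))
    ContinuousMultilinearMap.toMultilinearMap_injective

theorem LinearMap.det_id_add_smulRight {K E : Type*} [Field K] [AddCommGroup E] [Module K E]
    [FiniteDimensional K E] (f : E →ₗ[K] K) (v : E) :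
    LinearMap.det (LinearMap.id + f.smulRight v) = 1 + f v := by
  let b := Module.finBasis K E
  have hmat : LinearMap.toMatrix b b (f.smulRight v) =
      Matrix.replicateCol (Fin 1) (b.repr v) * Matrix.replicateRow (Fin 1) (fun k => f (b k)) := by
    ext j k
    simp [LinearMap.toMatrix_apply, Matrix.mul_apply, mul_comm]
  rw [← LinearMap.det_toMatrix b, map_add, LinearMap.toMatrix_id, hmat]
  refine (Matrix.det_one_add_replicateCol_mul_replicateRow _ _).trans ?_
  conv_rhs => rw [← b.sum_repr v]
  simp only [dotProduct, map_sum, map_smul, smul_eq_mul, mul_comm]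

theorem ContinuousLinearMap.det_id_add_smulRight {K E : Type*} [RCLike K] [NormedAddCommGroup E]
    [NormedSpace K E] [FiniteDimensional K E] (f : E →L[K] K) (v : E) :
    (ContinuousLinearMap.id K E + f.smulRight v).det = 1 + f v :=
  LinearMap.det_id_add_smulRight (f : E →ₗ[K] K) v

theorem Convex.eq_zero_of_map_add_smul_eq {E : Type*} [NormedAddCommGroup E] [NormedSpace ℝ E]
    {W : Set E} {φ : E → ℝ} {v y : E} {t : ℝ} (hWo : IsOpen W) (hWc : Convex ℝ W)
    (hφ : DifferentiableOn ℝ φ W) (hv : ∀ z ∈ W, fderiv ℝ φ z v ≠ 0) (hy : y ∈ W)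
    (hyt : y + t • v ∈ W) (h : φ (y + t • v) = φ y) : t = 0 := by
  by_contra ht
  let p : ℝ → E := fun s => y + s • (t • v)
  have hp : ∀ s ∈ Icc (0 : ℝ) 1, p s ∈ W := fun s hs => by
    simpa [p] using hWc.add_smul_sub_mem hy hyt hs
  have hφp : ∀ s ∈ Icc (0 : ℝ) 1, HasDerivAt (φ ∘ p) (t * fderiv ℝ φ (p s) v) s := fun s hs => by
    have hline : HasDerivAt p (t • v) s := by
      simpa [p] using ((hasDerivAt_id s).smul_const (t • v)).const_add y
    simpa using (hφ.differentiableAt (hWo.mem_nhds (hp s hs))).hasFDerivAt.comp_hasDerivAt s hline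
  obtain ⟨s, hs, hcrit⟩ := exists_hasDerivAt_eq_zero zero_lt_one
    (fun s hs => (hφp s hs).continuousAt.continuousWithinAt) (by simpa [p] using h.symm)
    (fun s hs => hφp s (Ioo_subset_Icc_self hs))
  exact mul_ne_zero ht (hv _ (hp s (Ioo_subset_Icc_self hs))) hcrit

theorem AnalyticAt.eventuallyEq_zero_of_iteratedFDeriv_eq_zero {𝕜 E F : Type*}
    [NontriviallyNormedField 𝕜] [CharZero 𝕜] [NormedAddCommGroup E] [NormedSpace 𝕜 E]
    [NormedAddCommGroup F] [NormedSpace 𝕜 F] [CompleteSpace F] {f : E → F} {x : E}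
    (hf : AnalyticAt 𝕜 f x) (h : ∀ n, iteratedFDeriv 𝕜 n f x = 0) : f =ᶠ[𝓝 x] 0 := by
  obtain ⟨p, r, hp⟩ := hf
  filter_upwards [Metric.eball_mem_nhds x hp.r_pos] with y hy
  have hsum := hp.hasSum_iteratedFDeriv (y := y - x) (by simpa [edist_eq_enorm_sub] using hy)
  simp only [h, zero_apply, smul_zero, add_sub_cancel] at hsum
  exact hsum.unique hasSum_zero

namespace EuclideanSpace

variable {ι : Type*}

theorem volume_preimage_apply_eq_zero [Fintype ι] (i : ι) {M : Set ℝ} (hM : volume M = 0) :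
    volume {y : EuclideanSpace ℝ ι | y i ∈ M} = 0 := by
  classical
  refine ((volume_preserving_symm_measurableEquiv_toLp ι).measure_preimage_equiv
    (Function.eval i ⁻¹' M)).trans ?_
  rw [Set.eval_preimage, volume_pi_pi]
  exact Finset.prod_eq_zero (Finset.mem_univ i) (by simp [hM])

theorem exists_apply_single_ne_zero [Fintype ι] [DecidableEq ι] {F : Type*}
    [NormedAddCommGroup F] [NormedSpace ℝ F] {c : EuclideanSpace ℝ ι →L[ℝ] F} (hc : c ≠ 0) :
    ∃ i, c (single i 1) ≠ 0 := by
  contrapose! hc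
  exact ContinuousLinearMap.coe_injective
    ((EuclideanSpace.basisFun ι ℝ).toBasis.ext fun i => by simpa using hc i)

section ReplaceCoord

variable [DecidableEq ι]

noncomputable def replaceCoord (φ : EuclideanSpace ℝ ι → ℝ) (i : ι) (y : EuclideanSpace ℝ ι) :
    EuclideanSpace ℝ ι :=
  y + (φ y - y i) • single i 1

variable {φ : EuclideanSpace ℝ ι → ℝ} {i : ι}

@[simp]
theorem replaceCoord_apply_self (y : EuclideanSpace ℝ ι) : replaceCoord φ i y i = φ y := by
  simp [replaceCoord]

theorem replaceCoord_apply_of_ne (y : EuclideanSpace ℝ ι) {j : ι} (hj : j ≠ i) :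
    replaceCoord φ i y j = y j := by
  simp [replaceCoord, hj]

variable [Fintype ι]

theorem hasFDerivAt_replaceCoord {φ' : EuclideanSpace ℝ ι →L[ℝ] ℝ} {y : EuclideanSpace ℝ ι}
    (hφ : HasFDerivAt φ φ' y) :
    HasFDerivAt (replaceCoord φ i)
      (ContinuousLinearMap.id ℝ _ + (φ' - proj i).smulRight (single i 1)) y :=
  (hasFDerivAt_id y).add ((hφ.sub (proj i).hasFDerivAt).smul_const _)

theorem det_id_add_sub_proj_smulRight_single (φ' : EuclideanSpace ℝ ι →L[ℝ] ℝ) :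
    (ContinuousLinearMap.id ℝ _ + (φ' - proj i).smulRight (single i 1)).det = φ' (single i 1) := by
  rw [ContinuousLinearMap.det_id_add_smulRight]
  simp

theorem injOn_replaceCoord {W : Set (EuclideanSpace ℝ ι)} (hWo : IsOpen W) (hWc : Convex ℝ W)
    (hφ : DifferentiableOn ℝ φ W) (hi : ∀ y ∈ W, fderiv ℝ φ y (single i 1) ≠ 0) :
    InjOn (replaceCoord φ i) W := by
  intro y hy z hz hyz
  have hcoord : ∀ j ≠ i, z j = y j := fun j hj => by
    simpa [replaceCoord_apply_of_ne _ hj] using congrArg (· j) hyz.symm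
  have hzy : z = y + (z i - y i) • single i 1 := by
    ext j
    by_cases hj : j = i
    · subst hj; simp
    · simp [hj, hcoord j hj]
  have hφzy : φ z = φ y := by simpa using congrArg (· i) hyz.symm
  have hzi := hWc.eq_zero_of_map_add_smul_eq hWo hφ hi hy (hzy ▸ hz) (hzy ▸ hφzy)
  rw [hzy, hzi, zero_smul, add_zero]

theorem volume_inter_preimage_eq_zero_of_fderiv_apply_single_ne_zero
    {W : Set (EuclideanSpace ℝ ι)} (hWo : IsOpen W) (hWc : Convex ℝ W)
    (hφ : DifferentiableOn ℝ φ W) (hi : ∀ y ∈ W, fderiv ℝ φ y (single i 1) ≠ 0)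
    {B : Set ℝ} (hB : volume B = 0) : volume (W ∩ φ ⁻¹' B) = 0 := by
  let M := toMeasurable volume B
  let s := W ∩ φ ⁻¹' M
  refine measure_mono_null
    (inter_subset_inter_right _ (preimage_mono (subset_toMeasurable volume B))) ?_
  have hs : MeasurableSet s :=
    hφ.continuousOn.measurableSet_inter_preimage hWo.measurableSet (measurableSet_toMeasurable _ _)
  have hF : ∀ y ∈ s, HasFDerivWithinAt (replaceCoord φ i)
      (ContinuousLinearMap.id ℝ _ + (fderiv ℝ φ y - proj i).smulRight (single i 1)) s y :=
    fun y hy => (hasFDerivAt_replaceCoord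
      (hφ.differentiableAt (hWo.mem_nhds hy.1)).hasFDerivAt).hasFDerivWithinAt
  have himage : volume (replaceCoord φ i '' s) = 0 := by
    refine measure_mono_null ?_ (volume_preimage_apply_eq_zero i (M := M) (by simpa [M] using hB))
    rintro _ ⟨y, hy, rfl⟩
    simpa using hy.2
  have hdet := lintegral_abs_det_fderiv_le_addHaar_image volume hs hF
    ((injOn_replaceCoord hWo hWc hφ hi).mono inter_subset_left)
  rw [himage, nonpos_iff_eq_zero,
    lintegral_eq_zero_iff' (aemeasurable_ofReal_abs_det_fderivWithin volume hs hF),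
    EventuallyEq, ae_restrict_iff' hs] at hdet
  refine measure_eq_zero_iff_ae_notMem.2 (hdet.mono fun y hy hys => ?_)
  simpa [det_id_add_sub_proj_smulRight_single, hi y hys.1] using hy hys

end ReplaceCoord

theorem volume_regular_preimage_eq_zero [Fintype ι] {V : Set (EuclideanSpace ℝ ι)} (hV : IsOpen V)
    {φ : EuclideanSpace ℝ ι → ℝ} (hφ : ContDiffOn ℝ 1 φ V) {B : Set ℝ} (hB : volume B = 0) :
    volume {y | y ∈ V ∧ φ y ∈ B ∧ fderiv ℝ φ y ≠ 0} = 0 := by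
  classical
  refine measure_null_of_locally_null _ fun x ⟨hxV, _, hx⟩ => ?_
  obtain ⟨i, hi⟩ := exists_apply_single_ne_zero hx
  have hcont : ContinuousAt (fun y => fderiv ℝ φ y (single i 1)) x :=
    ((hφ.continuousOn_fderiv_of_isOpen hV le_rfl).continuousAt (hV.mem_nhds hxV)).clm_apply
      continuousAt_const
  obtain ⟨r, hr, hball⟩ := Metric.mem_nhds_iff.1 ((hcont.eventually_ne hi).and (hV.mem_nhds hxV))
  refine ⟨Metric.ball x r ∩ φ ⁻¹' B, mem_nhdsWithin.2 ⟨Metric.ball x r, Metric.isOpen_ball,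
    Metric.mem_ball_self hr, fun y hy => ⟨hy.1, hy.2.2.1⟩⟩, ?_⟩
  exact volume_inter_preimage_eq_zero_of_fderiv_apply_single_ne_zero Metric.isOpen_ball
    (convex_ball x r) ((hφ.differentiableOn one_ne_zero).mono fun y hy => (hball hy).2)
    (fun y hy => (hball hy).1) hB

theorem volume_regular_zeros_eq_zero [Fintype ι] {F : Type*} [NormedAddCommGroup F]
    [NormedSpace ℝ F] [FiniteDimensional ℝ F] {V : Set (EuclideanSpace ℝ ι)} (hV : IsOpen V)
    {Φ : EuclideanSpace ℝ ι → F} (hΦ : ContDiffOn ℝ 1 Φ V) :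
    volume {y | y ∈ V ∧ Φ y = 0 ∧ fderiv ℝ Φ y ≠ 0} = 0 := by
  let b := Module.finBasis ℝ F
  let ℓ : Fin (Module.finrank ℝ F) → F →L[ℝ] ℝ :=
    fun j => LinearMap.toContinuousLinearMap (b.coord j)
  have hsub : {y | y ∈ V ∧ Φ y = 0 ∧ fderiv ℝ Φ y ≠ 0} ⊆ ⋃ j,
      {y | y ∈ V ∧ (ℓ j ∘ Φ) y ∈ ({0} : Set ℝ) ∧ fderiv ℝ (ℓ j ∘ Φ) y ≠ 0} := by
    rintro y ⟨hyV, hy0, hy⟩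
    have hΦy := ((hΦ.differentiableOn one_ne_zero).differentiableAt (hV.mem_nhds hyV)).hasFDerivAt
    obtain ⟨j, hj⟩ : ∃ j, (ℓ j).comp (fderiv ℝ Φ y) ≠ 0 := by
      contrapose! hy
      ext1 v
      exact b.forall_coord_eq_zero_iff.1 fun j => congrArg (· v) (hy j)
    exact mem_iUnion.2 ⟨j, hyV, by simp [hy0], by rwa [((ℓ j).hasFDerivAt.comp y hΦy).fderiv]⟩
  exact measure_mono_null hsub (measure_iUnion_null fun j =>
    volume_regular_preimage_eq_zero hV ((ℓ j).contDiff.comp_contDiffOn hΦ) (measure_singleton 0))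

theorem volume_zeros_eq_zero_of_analyticOnNhd [Fintype ι] {F : Type*} [NormedAddCommGroup F]
    [NormedSpace ℝ F] [FiniteDimensional ℝ F] {V : Set (EuclideanSpace ℝ ι)} (hV : IsOpen V)
    (hVc : IsPreconnected V) {Φ : EuclideanSpace ℝ ι → F} (hΦ : AnalyticOnNhd ℝ Φ V)
    (hne : ∃ x ∈ V, Φ x ≠ 0) : volume {y | y ∈ V ∧ Φ y = 0} = 0 := by
  have hsub : {y | y ∈ V ∧ Φ y = 0} ⊆ ⋃ n : ℕ, {y | y ∈ V ∧ iteratedFDeriv ℝ n Φ y = 0 ∧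
      fderiv ℝ (iteratedFDeriv ℝ n Φ) y ≠ 0} := by
    rintro y ⟨hyV, hy0⟩
    have hflat : ¬ ∀ n, iteratedFDeriv ℝ n Φ y = 0 := fun h => by
      obtain ⟨x, hxV, hx⟩ := hne
      exact hx (hΦ.eqOn_zero_of_preconnected_of_eventuallyEq_zero hVc hyV
        ((hΦ y hyV).eventuallyEq_zero_of_iteratedFDeriv_eq_zero h) hxV)
    have h0 : iteratedFDeriv ℝ 0 Φ y = 0 := by
      ext m
      simp [hy0]
    obtain ⟨n, hn, hn1⟩ : ∃ n, iteratedFDeriv ℝ n Φ y = 0 ∧ iteratedFDeriv ℝ (n + 1) Φ y ≠ 0 := by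
      by_contra! h
      exact hflat fun n => Nat.rec h0 (fun n hn => h n hn) n
    refine mem_iUnion.2 ⟨n, hyV, hn, ?_⟩
    intro h
    rw [iteratedFDeriv_succ_eq_comp_left, Function.comp_apply, h] at hn1
    exact hn1 (LinearIsometryEquiv.map_zero _)
  exact measure_mono_null hsub (measure_iUnion_null fun n =>
    volume_regular_zeros_eq_zero hV (hΦ.iteratedFDeriv n).contDiffOn_of_completeSpace)

end EuclideanSpace

theorem stmt_8_general (d : ℕ) (U : Set (EuclideanSpace ℝ (Fin d)))
    (hU : IsOpen U) (hUconn : IsConnected U)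
    (g : EuclideanSpace ℝ (Fin d) → ℝ) (hg : AnalyticOnNhd ℝ g U)
    (hnc : ¬ ∃ c : ℝ, ∀ x ∈ U, g x = c) :
    ∀ B : Set ℝ, volume B = 0 → volume {x | x ∈ U ∧ g x ∈ B} = 0 := by
  intro B hB
  have hdg : ∃ x ∈ U, fderiv ℝ g x ≠ 0 := by
    by_contra! h
    exact hnc (hU.exists_is_const_of_fderiv_eq_zero hUconn.isPreconnected
      hg.differentiableOn h)
  have hcrit := EuclideanSpace.volume_zeros_eq_zero_of_analyticOnNhd hU hUconn.isPreconnected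
    hg.fderiv hdg
  have hreg := EuclideanSpace.volume_regular_preimage_eq_zero hU
    hg.contDiffOn_of_completeSpace hB
  refine measure_mono_null (fun x ⟨hxU, hxB⟩ => ?_) (measure_union_null hreg hcrit)
  by_cases hx : fderiv ℝ g x = 0
  · exact Or.inr ⟨hxU, hx⟩
  · exact Or.inl ⟨hxU, hxB, hx⟩

/-- If `g` is real analytic and not constant on a connected open set `U ⊆ ℝ^d` (`d ≥ 1`),
then the preimage in `U` of any set `B ⊆ ℝ` of one-dimensional Lebesgue measure zero has
`d`-dimensional Lebesgue measure zero. -/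
theorem stmt_8 (d : ℕ) (hd : 1 ≤ d) (U : Set (EuclideanSpace ℝ (Fin d)))
    (hU : IsOpen U) (hUconn : IsConnected U)
    (g : EuclideanSpace ℝ (Fin d) → ℝ) (hg : AnalyticOnNhd ℝ g U)
    (hnc : ¬ ∃ c : ℝ, ∀ x ∈ U, g x = c) :
    ∀ B : Set ℝ, volume B = 0 → volume {x | x ∈ U ∧ g x ∈ B} = 0 :=
  stmt_8_general d U hU hUconn g hg hnc
end

section
/- Let d ≥ 1, let U ⊆ ℝ^d be an open set with finitely many connected components, let g be real analytic on U, and let μ be a finite Borel measure on ℝ^d with μ(ℝ^d \ U) = 0 which is absolutely continuous with respect to d-dimensional Lebesgue measure. Let U_disc be the union of those connected components of U on which g is constant, and let U_cont := U \ U_disc. Then the pushforward under g of the restriction of μ to U_cont is absolutely continuous with respect to one-dimensional Lebesgue measure, and the pushforward under g of the restriction of μ to U_disc is supported on a finite subset of ℝ. Consequently the pushforward g_*μ is the sum of an absolutely continuous measure and a measure with finitely many atoms. -/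
/-!
On a component of `U` where `g` is not constant, every point `x` has a first nonvanishing
derivative `D^(m+1) g x`. If `m = 0`, `x` is a regular point of `g`; otherwise `x` lies in the
zero set of `φ = D^m g (·) (v₁, …, vₘ)` and is a regular point of `φ`, for suitable vectors `vᵢ`.
Near a regular point `x` of a `C¹` function `φ`, with `L = Dφ x` and `L w = 1`, the map
`y ↦ y + (φ y - L y) • w` is tangent to the identity at `x`, hence a local diffeomorphism, and it
turns `φ` into the linear form `L`; by the change of variables formula, preimages under `φ` of null
sets are therefore locally null. On the components where `g` is constant, `g` takes only finitely
many values.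
-/

open MeasureTheory Set Filter Topology

section ConstantComponents

variable {X Y : Type*} [TopologicalSpace X] (U : Set X) (g : X → Y)

def constantComponents : Set X :=
  {y | y ∈ U ∧ ∀ z ∈ connectedComponentIn U y, g z = g y}

variable {U}

theorem IsOpen.constantComponents [LocallyConnectedSpace X] (hU : IsOpen U) :
    IsOpen (constantComponents U g) := by
  refine isOpen_iff_mem_nhds.2 fun y ⟨hyU, hy⟩ => ?_
  refine Filter.mem_of_superset (hU.connectedComponentIn.mem_nhds (mem_connectedComponentIn hyU))
    fun z hz => ⟨connectedComponentIn_subset U y hz, fun w hw => ?_⟩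
  rw [← connectedComponentIn_eq hz] at hw
  rw [hy w hw, hy z hz]

theorem finite_image_constantComponents
    (hcomp : {C : Set X | ∃ x ∈ U, C = connectedComponentIn U x}.Finite) :
    (g '' constantComponents U g).Finite := by
  have hsingle : ∀ x, (g '' (connectedComponentIn U x ∩ constantComponents U g)).Subsingleton := by
    rintro x - ⟨y, ⟨hyx, -, hy⟩, rfl⟩ - ⟨z, ⟨hzx, -⟩, rfl⟩
    rw [connectedComponentIn_eq hyx] at hzx
    exact (hy z hzx).symm
  refine (hcomp.biUnion (t := fun C => g '' (C ∩ constantComponents U g))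
    fun C ⟨x, _, hC⟩ => hC ▸ (hsingle x).finite).subset ?_
  rintro - ⟨y, hy, rfl⟩
  exact mem_biUnion ⟨y, hy.1, rfl⟩ ⟨y, ⟨mem_connectedComponentIn hy.1, hy⟩, rfl⟩

end ConstantComponents

section Analytic

variable {𝕜 : Type*} [NontriviallyNormedField 𝕜] [CharZero 𝕜] {E F : Type*}
  [NormedAddCommGroup E] [NormedSpace 𝕜 E] [NormedAddCommGroup F] [NormedSpace 𝕜 F]
  [CompleteSpace F] {f : E → F} {x : E}

theorem AnalyticAt.eventually_eq_of_iteratedFDeriv_succ_eq_zero (hf : AnalyticAt 𝕜 f x)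
    (h : ∀ n, iteratedFDeriv 𝕜 (n + 1) f x = 0) : ∀ᶠ z in 𝓝 x, f z = f x := by
  obtain ⟨p, r, hp⟩ := hf
  filter_upwards [Metric.eball_mem_nhds x hp.r_pos] with z hz
  have hz' : z - x ∈ Metric.eball (0 : E) r := by
    rwa [Metric.mem_eball, edist_zero_right, ← edist_eq_enorm_sub]
  have hTaylor := hp.hasSum_iteratedFDeriv hz'
  rw [add_sub_cancel] at hTaylor
  refine hTaylor.unique ?_
  convert hasSum_single (f := fun n => (n.factorial : 𝕜)⁻¹ • iteratedFDeriv 𝕜 n f x fun _ => z - x)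
    0 fun n hn => by obtain ⟨k, rfl⟩ := Nat.exists_eq_succ_of_ne_zero hn; simp [h k]
  simp

theorem AnalyticOnNhd.exists_iteratedFDeriv_succ_ne_zero {U : Set E} (hf : AnalyticOnNhd 𝕜 f U)
    (hx : x ∈ U) (hne : ∃ z ∈ connectedComponentIn U x, f z ≠ f x) :
    ∃ n, iteratedFDeriv 𝕜 (n + 1) f x ≠ 0 := by
  by_contra! h
  obtain ⟨z, hz, hfz⟩ := hne
  exact hfz <| (hf.mono (connectedComponentIn_subset U x)).eqOn_of_preconnected_of_eventuallyEq
    analyticOnNhd_const isPreconnected_connectedComponentIn (mem_connectedComponentIn hx)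
    ((hf x hx).eventually_eq_of_iteratedFDeriv_succ_eq_zero h) hz

end Analytic

section AddHaar

variable {E : Type*} [NormedAddCommGroup E] [NormedSpace ℝ E] [FiniteDimensional ℝ E]
  [MeasurableSpace E] [BorelSpace E] (μ : Measure E) [μ.IsAddHaarMeasure]

theorem addHaar_eq_zero_of_addHaar_image_eq_zero {s : Set E} (hs : MeasurableSet s) {f : E → E}
    {f' : E → E →L[ℝ] E} (hf' : ∀ x ∈ s, HasFDerivWithinAt f (f' x) s x) (hinj : InjOn f s)
    (hdet : ∀ x ∈ s, (f' x).det ≠ 0) (himage : μ (f '' s) = 0) : μ s = 0 := by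
  have hint := lintegral_abs_det_fderiv_eq_addHaar_image μ hs hf' hinj
  rw [himage, setLIntegral_eq_zero_iff' hs (aemeasurable_ofReal_abs_det_fderivWithin μ hs hf')]
    at hint
  rw [measure_eq_zero_iff_ae_notMem]
  filter_upwards [hint] with x hx hxs
  exact hdet x hxs (by simpa using hx hxs)

theorem addHaar_preimage_linearMap_eq_zero {F : Type*} [NormedAddCommGroup F] [NormedSpace ℝ F]
    [MeasurableSpace F] [BorelSpace F] (ν : Measure F) [ν.IsAddHaarMeasure] {L : E →ₗ[ℝ] F}
    (hL : Function.Surjective L) {N : Set F} (hN : ν N = 0) : μ (L ⁻¹' N) = 0 := by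
  obtain ⟨N', hNN', hN'm, hN'0⟩ := exists_measurable_superset_of_null hN
  refine measure_mono_null (preimage_mono hNN') ?_
  have := (ae_comp_linearMap_mem_iff L μ ν hL hN'm.compl).2 (measure_eq_zero_iff_ae_notMem.1 hN'0)
  exact measure_eq_zero_iff_ae_notMem.2 this

theorem ContDiffAt.exists_mem_nhds_addHaar_inter_preimage_eq_zero_of_hasFDerivAt_equiv
    {Ψ : E → E} {Ψ' : E ≃L[ℝ] E} {x : E} (hΨ : ContDiffAt ℝ 1 Ψ x)
    (hΨx : HasFDerivAt Ψ (Ψ' : E →L[ℝ] E) x) :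
    ∃ V ∈ 𝓝 x, ∀ B : Set E, μ B = 0 → μ (V ∩ Ψ ⁻¹' B) = 0 := by
  have hstrict : HasStrictFDerivAt Ψ (Ψ' : E →L[ℝ] E) x :=
    hΨx.fderiv ▸ hΨ.hasStrictFDerivAt one_ne_zero
  set P := hstrict.toOpenPartialHomeomorph Ψ
  have hdet : ∀ᶠ y in 𝓝 x, (fderiv ℝ Ψ y).det ≠ 0 := by
    refine (ContinuousLinearMap.continuous_det.continuousAt.comp
      (hΨ.continuousAt_fderiv one_ne_zero)).eventually_ne ?_
    rw [Function.comp_apply, hΨx.fderiv]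
    exact (LinearEquiv.isUnit_det' Ψ'.toLinearEquiv).ne_zero
  set W := {y | y ∈ P.source ∧ DifferentiableAt ℝ Ψ y ∧ (fderiv ℝ Ψ y).det ≠ 0}
  have hW : W ∈ 𝓝 x :=
    (show ∀ᶠ y in 𝓝 x, y ∈ P.source from
      P.open_source.mem_nhds hstrict.mem_toOpenPartialHomeomorph_source).and
      (((hΨ.eventually (by simp)).mono fun y hy => hy.differentiableAt one_ne_zero).and hdet)
  have hWint : ∀ y ∈ interior W, y ∈ W := fun y hy => interior_subset hy
  refine ⟨interior W, interior_mem_nhds.2 hW, fun B hB => ?_⟩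
  obtain ⟨B', hBB', hB'm, hB'0⟩ := exists_measurable_superset_of_null hB
  have hs : MeasurableSet (interior W ∩ Ψ ⁻¹' B') :=
    ContinuousOn.measurableSet_inter_preimage
      (fun y hy => (hWint y hy).2.1.continuousAt.continuousWithinAt)
      isOpen_interior.measurableSet hB'm
  refine measure_mono_null (inter_subset_inter_right _ (preimage_mono hBB'))
    (addHaar_eq_zero_of_addHaar_image_eq_zero μ hs
      (fun y hy => (hWint y hy.1).2.1.hasFDerivAt.hasFDerivWithinAt)
      ?_ (fun y hy => (hWint y hy.1).2.2) ?_)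
  · rw [← hstrict.toOpenPartialHomeomorph_coe]
    exact P.injOn.mono fun y hy => (hWint y hy.1).1
  · exact measure_mono_null (image_subset_iff.2 fun y hy => hy.2) hB'0

theorem ContDiffAt.exists_mem_nhds_addHaar_inter_preimage_eq_zero_of_fderiv_ne_zero
    {φ : E → ℝ} {x : E} (hφ : ContDiffAt ℝ 1 φ x) (hx : fderiv ℝ φ x ≠ 0) :
    ∃ V ∈ 𝓝 x, ∀ N : Set ℝ, volume N = 0 → μ (V ∩ φ ⁻¹' N) = 0 := by
  set L := fderiv ℝ φ x
  have hLsurj : Function.Surjective (L : E →ₗ[ℝ] ℝ) :=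
    LinearMap.surjective_of_ne_zero (ContinuousLinearMap.coe_injective.ne hx)
  obtain ⟨w, hw⟩ : ∃ w, L w = 1 := hLsurj 1
  set Ψ : E → E := fun y => y + (φ y - L y) • w
  have hLΨ : φ = L ∘ Ψ := funext fun y => by simp [Ψ, hw]
  have hΨ : ContDiffAt ℝ 1 Ψ x :=
    contDiffAt_id.add ((hφ.sub L.contDiff.contDiffAt).smul contDiffAt_const)
  have hΨx : HasFDerivAt Ψ ((ContinuousLinearEquiv.refl ℝ E : E ≃L[ℝ] E) : E →L[ℝ] E) x := by
    have := (hasFDerivAt_id x).add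
      (((hφ.differentiableAt one_ne_zero).hasFDerivAt.sub L.hasFDerivAt).smul_const w)
    rwa [sub_self, ContinuousLinearMap.zero_smulRight, add_zero] at this
  obtain ⟨V, hV, hVnull⟩ :=
    hΨ.exists_mem_nhds_addHaar_inter_preimage_eq_zero_of_hasFDerivAt_equiv μ hΨx
  exact ⟨V, hV, fun N hN => hLΨ ▸ hVnull _ (addHaar_preimage_linearMap_eq_zero μ volume hLsurj hN)⟩

theorem addHaar_inter_preimage_eq_zero_of_fderiv_ne_zero {φ : E → ℝ} {S : Set E}
    (hS : ∀ x ∈ S, ContDiffAt ℝ 1 φ x ∧ fderiv ℝ φ x ≠ 0) {N : Set ℝ} (hN : volume N = 0) :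
    μ (S ∩ φ ⁻¹' N) = 0 := by
  refine measure_null_of_locally_null _ fun x hx => ?_
  obtain ⟨hφ, hφx⟩ := hS x hx.1
  obtain ⟨V, hV, hVnull⟩ :=
    hφ.exists_mem_nhds_addHaar_inter_preimage_eq_zero_of_fderiv_ne_zero μ hφx
  refine ⟨_, inter_mem_nhdsWithin _ hV, measure_mono_null ?_ (hVnull N hN)⟩
  exact fun y hy => ⟨hy.2, hy.1.2⟩

variable {g : E → ℝ} {U : Set E}

theorem AnalyticOnNhd.addHaar_setOf_iteratedFDeriv_eq_zero_ne_zero (hg : AnalyticOnNhd ℝ g U)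
    (m : ℕ) :
    μ {y | y ∈ U ∧ iteratedFDeriv ℝ m g y = 0 ∧ iteratedFDeriv ℝ (m + 1) g y ≠ 0} = 0 := by
  refine measure_null_of_locally_null _ fun x ⟨hxU, _, hx⟩ => ?_
  obtain ⟨v, hv⟩ := DFunLike.ne_iff.1 hx
  set A := ContinuousMultilinearMap.apply ℝ (fun _ : Fin m => E) ℝ (Fin.tail v)
  set φ : E → ℝ := A ∘ iteratedFDeriv ℝ m g
  have hD := hg.iteratedFDeriv m x hxU
  have hφ' : fderiv ℝ φ x (v 0) = iteratedFDeriv ℝ (m + 1) g x v := by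
    rw [(A.hasFDerivAt.comp x hD.differentiableAt.hasFDerivAt).fderiv,
      iteratedFDeriv_succ_apply_left]
    rfl
  have hφ : ContDiffAt ℝ 1 φ x := ((A.analyticAt _).comp hD).contDiffAt
  have hφx : fderiv ℝ φ x ≠ 0 := fun h => hv (by rw [← hφ', h]; rfl)
  obtain ⟨V, hV, hVnull⟩ :=
    hφ.exists_mem_nhds_addHaar_inter_preimage_eq_zero_of_fderiv_ne_zero μ hφx
  refine ⟨_, inter_mem_nhdsWithin _ hV, measure_mono_null ?_ (hVnull {0} Real.volume_singleton)⟩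
  rintro y ⟨⟨-, hy, -⟩, hyV⟩
  exact ⟨hyV, show A _ = 0 by rw [hy]; rfl⟩

theorem AnalyticOnNhd.addHaar_diff_constantComponents_inter_preimage_eq_zero
    (hg : AnalyticOnNhd ℝ g U) {N : Set ℝ} (hN : volume N = 0) :
    μ ((U \ constantComponents U g) ∩ g ⁻¹' N) = 0 := by
  classical
  have hcover : (U \ constantComponents U g) ∩ g ⁻¹' N ⊆
      ({y | ContDiffAt ℝ 1 g y ∧ fderiv ℝ g y ≠ 0} ∩ g ⁻¹' N) ∪
        ⋃ m, {y | y ∈ U ∧ iteratedFDeriv ℝ m g y = 0 ∧ iteratedFDeriv ℝ (m + 1) g y ≠ 0} := by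
    rintro x ⟨⟨hxU, hx⟩, hxN⟩
    have hex := hg.exists_iteratedFDeriv_succ_ne_zero hxU (by
      by_contra! h
      exact hx ⟨hxU, h⟩)
    obtain ⟨k, hk, hmin⟩ : ∃ k, iteratedFDeriv ℝ (k + 1) g x ≠ 0 ∧
        ∀ j < k, iteratedFDeriv ℝ (j + 1) g x = 0 :=
      ⟨Nat.find hex, Nat.find_spec hex, fun j hj => not_not.1 (Nat.find_min hex hj)⟩
    cases k with
    | zero =>
      refine Or.inl ⟨⟨(hg x hxU).contDiffAt, fun h => hk ?_⟩, hxN⟩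
      rw [← norm_eq_zero, norm_iteratedFDeriv_one, h, norm_zero]
    | succ j => exact Or.inr (mem_iUnion.2 ⟨j + 1, hxU, hmin j j.lt_succ_self, hk⟩)
  exact measure_mono_null hcover <| measure_union_null
    (addHaar_inter_preimage_eq_zero_of_fderiv_ne_zero μ (fun _ hy => hy) hN)
    (measure_iUnion_null (hg.addHaar_setOf_iteratedFDeriv_eq_zero_ne_zero μ))

end AddHaar

theorem stmt_11_general (d : ℕ) (U : Set (EuclideanSpace ℝ (Fin d))) (hU : IsOpen U)
    (hcomp : {C : Set (EuclideanSpace ℝ (Fin d)) | ∃ x ∈ U, C = connectedComponentIn U x}.Finite)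
    (g : EuclideanSpace ℝ (Fin d) → ℝ) (hg : AnalyticOnNhd ℝ g U)
    (μ : Measure (EuclideanSpace ℝ (Fin d)))
    (hμU : μ Uᶜ = 0) (hac : μ ≪ volume)
    (Udisc Ucont : Set (EuclideanSpace ℝ (Fin d)))
    (hUdisc : Udisc = {y | y ∈ U ∧ ∀ z ∈ connectedComponentIn U y, g z = g y})
    (hUcont : Ucont = U \ Udisc) :
    Measure.map g (μ.restrict Ucont) ≪ (volume : Measure ℝ) ∧
    (∃ F : Finset ℝ, Measure.map g (μ.restrict Udisc) (↑F)ᶜ = 0) ∧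
    (∃ ν₁ ν₂ : Measure ℝ, Measure.map g μ = ν₁ + ν₂ ∧ ν₁ ≪ (volume : Measure ℝ) ∧
      ∃ F : Finset ℝ, ν₂ (↑F)ᶜ = 0) := by
  change Udisc = constantComponents U g at hUdisc
  subst hUdisc hUcont
  have hdisc_meas : MeasurableSet (constantComponents U g) :=
    (hU.constantComponents g).measurableSet
  have hμ : μ.restrict U = μ := Measure.restrict_eq_self_of_ae_mem (mem_ae_iff.2 hμU)
  have hgμ : AEMeasurable g μ := hμ ▸ hg.continuousOn.aemeasurable hU.measurableSet
  have hcont : (μ.restrict (U \ constantComponents U g)).map g ≪ volume :=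
    .mk fun s hs hs0 => by
      rw [Measure.map_apply_of_aemeasurable hgμ.restrict hs,
        Measure.restrict_apply' (hU.measurableSet.diff hdisc_meas), inter_comm]
      exact hac (hg.addHaar_diff_constantComponents_inter_preimage_eq_zero volume hs0)
  set F := (finite_image_constantComponents g hcomp).toFinset
  have hdisc : (μ.restrict (constantComponents U g)).map g (↑F)ᶜ = 0 := by
    rw [Measure.map_apply_of_aemeasurable hgμ.restrict F.measurableSet.compl,
      Measure.restrict_apply' hdisc_meas]
    refine measure_mono_null (fun y ⟨hyF, hy⟩ => hyF ?_) measure_empty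
    simpa [F] using mem_image_of_mem g hy
  have hsplit : μ.map g = (μ.restrict (U \ constantComponents U g)).map g +
      (μ.restrict (constantComponents U g)).map g := by
    rw [← AEMeasurable.map_add₀ hgμ.restrict hgμ.restrict,
      ← Measure.restrict_union disjoint_sdiff_left hdisc_meas,
      sdiff_union_of_subset fun y hy => hy.1, hμ]
  exact ⟨hcont, ⟨F, hdisc⟩, _, _, hsplit, hcont, F, hdisc⟩

/-- Let `U ⊆ ℝ^d` (`d ≥ 1`) be an open set with finitely many connected components, let `g`
be real analytic on `U`, and let `μ` be a finite Borel measure concentrated on `U` and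
absolutely continuous with respect to Lebesgue measure. With `Udisc` the union of the
components on which `g` is constant and `Ucont := U \ Udisc`, the pushforward of
`μ.restrict Ucont` under `g` is absolutely continuous with respect to Lebesgue measure on
`ℝ`, the pushforward of `μ.restrict Udisc` is supported on a finite set, and hence `g⁎μ` is
the sum of an absolutely continuous measure and a measure with finitely many atoms. -/
theorem stmt_11 (d : ℕ) (hd : 1 ≤ d) (U : Set (EuclideanSpace ℝ (Fin d))) (hU : IsOpen U)
    (hcomp : {C : Set (EuclideanSpace ℝ (Fin d)) | ∃ x ∈ U, C = connectedComponentIn U x}.Finite)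
    (g : EuclideanSpace ℝ (Fin d) → ℝ) (hg : AnalyticOnNhd ℝ g U)
    (μ : Measure (EuclideanSpace ℝ (Fin d))) [IsFiniteMeasure μ]
    (hμU : μ Uᶜ = 0) (hac : μ ≪ volume)
    (Udisc Ucont : Set (EuclideanSpace ℝ (Fin d)))
    (hUdisc : Udisc = {y | y ∈ U ∧ ∀ z ∈ connectedComponentIn U y, g z = g y})
    (hUcont : Ucont = U \ Udisc) :
    Measure.map g (μ.restrict Ucont) ≪ (volume : Measure ℝ) ∧
    (∃ F : Finset ℝ, Measure.map g (μ.restrict Udisc) (↑F)ᶜ = 0) ∧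
    (∃ ν₁ ν₂ : Measure ℝ, Measure.map g μ = ν₁ + ν₂ ∧ ν₁ ≪ (volume : Measure ℝ) ∧
      ∃ F : Finset ℝ, ν₂ (↑F)ᶜ = 0) :=
  stmt_11_general d U hU hcomp g hg μ hμU hac Udisc Ucont hUdisc hUcont
end

section
/- Let d ≥ 1 and let a_1, …, a_d and c_1, …, c_d be positive real numbers such that cos(a_j) ≠ 0 for every j, and such that for every t ∈ (0,1] at most one index j satisfies cos(a_j·t) = 0. Define F(t) := Σ_{j=1}^d c_j·tan(a_j·t) wherever all cos(a_j·t) ≠ 0, let Z := { t ∈ (0,1] : (∀ j, cos(a_j·t) ≠ 0) and F(t) = 0 }, and let P := Σ_{j=1}^d |{ m ∈ ℕ : (2m+1)·π/2 < a_j }| (the number of poles of F in (0,1)). Then Z is finite and |Z| + 1 = P + χ, where χ = 1 if F(1) ≥ 0 and χ = 0 if F(1) < 0. -/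
/-!
Between consecutive poles `F` has positive derivative `Σ c_j a_j / cos² (a_j t)`, so it is
strictly increasing; at a pole exactly one summand blows up, so `F → +∞` from the left and
`F → -∞` from the right, while `F > 0` just to the right of `0`. Hence `F` has no zero before the
first pole, exactly one zero between consecutive poles (intermediate value theorem plus
monotonicity), and one zero after the last pole iff `F 1 ≥ 0`. The poles of `tan (a_j t)` in
`(0,1)` are the points `(2m+1)π / (2 a_j)` with `(2m+1)π/2 < a_j`, and different `j` give
different poles.
-/

open Real Filter Set Topology

namespace Real

theorem tendsto_tan_nhdsLT_of_cos_eq_zero {x : ℝ} (hx : cos x = 0) :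
    Tendsto tan (𝓝[<] x) atTop := by
  obtain ⟨k, rfl⟩ := cos_eq_zero_iff.mp hx
  have hshift : (2 * k + 1) * π / 2 + -(k * π) = π / 2 := by ring
  have h := tendsto_tan_pi_div_two
  rw [← hshift, ← map_add_right_nhdsLT, tendsto_map'_iff] at h
  exact h.congr fun t => (tan_periodic.int_mul k).sub_eq t

theorem tendsto_tan_nhdsGT_of_cos_eq_zero {x : ℝ} (hx : cos x = 0) :
    Tendsto tan (𝓝[>] x) atBot := by
  obtain ⟨k, rfl⟩ := cos_eq_zero_iff.mp hx
  have hshift : (2 * k + 1) * π / 2 + -((k + 1 : ℤ) * π) = -(π / 2) := by push_cast; ring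
  have h := tendsto_tan_neg_pi_div_two
  rw [← hshift, ← map_add_right_nhdsGT, tendsto_map'_iff] at h
  exact h.congr fun t => (tan_periodic.int_mul (k + 1)).sub_eq t

end Real

section ZeroCounting

variable {F : ℝ → ℝ} {x y : ℝ}

lemma pos_of_strictMonoOn_Ioc (hmono : StrictMonoOn F (Ioc x y))
    (hx : ∀ᶠ t in 𝓝[>] x, 0 < F t) {t : ℝ} (ht : t ∈ Ioc x y) : 0 < F t := by
  obtain ⟨s, hFs, hs⟩ := (hx.and (Ioo_mem_nhdsGT ht.1)).exists
  exact hFs.trans (hmono ⟨hs.1, hs.2.le.trans ht.2⟩ ht hs.2)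

lemma ncard_zeros_Ioc_of_eventually_neg (hxy : x < y) (hmono : StrictMonoOn F (Ioc x y))
    (hcont : ContinuousOn F (Ioc x y)) (hx : ∀ᶠ t in 𝓝[>] x, F t < 0) :
    {t ∈ Ioc x y | F t = 0}.Finite ∧
      {t ∈ Ioc x y | F t = 0}.ncard = if 0 ≤ F y then 1 else 0 := by
  have hsub : {t ∈ Ioc x y | F t = 0}.Subsingleton := fun s hs t ht =>
    hmono.injOn hs.1 ht.1 (hs.2.trans ht.2.symm)
  refine ⟨hsub.finite, ?_⟩
  split_ifs with hFy
  · obtain ⟨s, hFs, hs⟩ := (hx.and (Ioo_mem_nhdsGT hxy)).exists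
    obtain ⟨z, hz, hFz⟩ := intermediate_value_Ioc hs.2.le
      (hcont.mono (Icc_subset_Ioc_iff hs.2.le |>.mpr ⟨hs.1, le_rfl⟩)) ⟨hFs, hFy⟩
    rw [hsub.eq_singleton_of_mem ⟨⟨hs.1.trans hz.1, hz.2⟩, hFz⟩, ncard_singleton]
  · refine (ncard_eq_zero hsub.finite).mpr (eq_empty_of_forall_notMem fun t ⟨ht, hFt⟩ => hFy ?_)
    rw [← hFt]
    exact hmono.monotoneOn ht ⟨hxy, le_rfl⟩ ht.2

theorem ncard_zeros_add_one_eq_card_poles (Q : Finset ℝ) (hxy : x < y) (hQ : ↑Q ⊆ Ioo x y)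
    (hmono : ∀ s t, Ioc s t ⊆ Ioc x y \ Q → StrictMonoOn F (Ioc s t))
    (hcont : ContinuousOn F (Ioc x y \ Q))
    (hright : ∀ q ∈ Q, ∀ᶠ t in 𝓝[>] q, F t < 0)
    (hleft : ∀ q ∈ Q, ∀ᶠ t in 𝓝[<] q, 0 < F t)
    (hx : ∀ᶠ t in 𝓝[>] x, 0 < F t) :
    {t ∈ Ioc x y \ Q | F t = 0}.Finite ∧
      {t ∈ Ioc x y \ Q | F t = 0}.ncard + 1 = Q.card + if 0 ≤ F y then 1 else 0 := by
  classical
  induction Q using Finset.induction_on_max generalizing y with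
  | empty =>
    simp only [Finset.coe_empty, sdiff_empty] at hmono ⊢
    have hpos : ∀ t ∈ Ioc x y, 0 < F t := fun t =>
      pos_of_strictMonoOn_Ioc (hmono x y subset_rfl) hx
    have hzeros : {t ∈ Ioc x y | F t = 0} = ∅ :=
      eq_empty_of_forall_notMem fun t ⟨ht, hFt⟩ => (hpos t ht).ne' hFt
    rw [hzeros, if_pos (hpos y ⟨hxy, le_rfl⟩).le]
    simp
  | insert q s hlt ih =>
    have hq : q ∈ Ioo x y := hQ (Finset.mem_coe.mpr (s.mem_insert_self q))
    -- the interval `[y', q)` separates `q` from the poles in `s`, and `F > 0` on it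
    have hbefore : ∀ᶠ t in 𝓝[<] q, x < t ∧ (∀ r ∈ s, r < t) ∧ 0 < F t :=
      (eventually_nhdsWithin_of_eventually_nhds (eventually_gt_nhds hq.1)).and <|
        ((s.eventually_all).mpr fun r hr =>
          eventually_nhdsWithin_of_eventually_nhds (eventually_gt_nhds (hlt r hr))).and
          (hleft q (s.mem_insert_self q))
    obtain ⟨y', hy'q : y' < q, hIco⟩ := mem_nhdsLT_iff_exists_Ico_subset.mp hbefore
    have hy' := hIco ⟨le_rfl, hy'q⟩
    have hsub : Ioc x y' \ s ⊆ Ioc x y \ ↑(insert q s) := fun t ⟨ht, hts⟩ =>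
      ⟨⟨ht.1, ht.2.trans (hy'q.trans hq.2).le⟩, by
        simpa [hts] using (ht.2.trans_lt hy'q).ne⟩
    obtain ⟨hfin₁, hcard₁⟩ := ih hy'.1 (fun r hr => ⟨(hQ (by simp [hr])).1, hy'.2.1 r hr⟩)
      (fun a b hab => hmono a b (hab.trans hsub)) (hcont.mono hsub)
      (fun r hr => hright r (Finset.mem_insert_of_mem hr))
      (fun r hr => hleft r (Finset.mem_insert_of_mem hr))
    have htail : Ioc q y ⊆ Ioc x y \ ↑(insert q s) := fun t ht =>
      ⟨⟨hq.1.trans ht.1, ht.2⟩, by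
        simpa [ht.1.ne'] using fun hts => (hlt t hts).not_gt ht.1⟩
    obtain ⟨hfin₂, hcard₂⟩ := ncard_zeros_Ioc_of_eventually_neg hq.2 (hmono q y htail)
      (hcont.mono htail) (hright q (s.mem_insert_self q))
    have hsplit : {t ∈ Ioc x y \ ↑(insert q s) | F t = 0} =
        {t ∈ Ioc x y' \ s | F t = 0} ∪ {t ∈ Ioc q y | F t = 0} := by
      refine Subset.antisymm (fun t ⟨⟨ht, htQ⟩, hFt⟩ => ?_)
        (union_subset (fun t ht => ⟨hsub ht.1, ht.2⟩) fun t ht => ⟨htail ht.1, ht.2⟩)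
      rcases le_or_gt t y' with hty' | hy't
      · exact Or.inl ⟨⟨⟨ht.1, hty'⟩, fun hts => htQ (by simp [hts])⟩, hFt⟩
      rcases lt_trichotomy t q with htq | rfl | hqt
      · exact absurd hFt (hIco ⟨hy't.le, htq⟩).2.2.ne'
      · exact absurd (s.mem_insert_self t) htQ
      · exact Or.inr ⟨⟨hqt, ht.2⟩, hFt⟩
    have hdisj : Disjoint {t ∈ Ioc x y' \ s | F t = 0} {t ∈ Ioc q y | F t = 0} :=
      disjoint_left.mpr fun t ht ht' => (ht.1.1.2.trans_lt (hy'q.trans ht'.1.1)).false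
    rw [hsplit, ncard_union_eq hdisj hfin₁ hfin₂, Finset.card_insert_of_notMem
      fun h => (hlt q h).false]
    refine ⟨hfin₁.union hfin₂, ?_⟩
    rw [if_pos hy'.2.2.le] at hcard₁
    omega

end ZeroCounting

section TanSum

variable {ι : Type*} [Fintype ι] {a c : ι → ℝ}

noncomputable def tanSum (a c : ι → ℝ) (t : ℝ) : ℝ := ∑ j, c j * tan (a j * t)

lemma hasDerivAt_tanSum {t : ℝ} (ht : ∀ j, cos (a j * t) ≠ 0) :
    HasDerivAt (tanSum a c) (∑ j, c j * a j / cos (a j * t) ^ 2) t := by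
  unfold tanSum
  refine HasDerivAt.fun_sum fun j _ => ?_
  have h := ((hasDerivAt_tan (ht j)).comp t ((hasDerivAt_id t).const_mul (a j))).const_mul (c j)
  rwa [show c j * (1 / cos (a j * t) ^ 2 * (a j * 1)) = c j * a j / cos (a j * t) ^ 2 by ring]
    at h

lemma strictMonoOn_tanSum [Nonempty ι] (ha : ∀ j, 0 < a j) (hc : ∀ j, 0 < c j) {D : Set ℝ}
    (hD : Convex ℝ D) (hcos : ∀ t ∈ D, ∀ j, cos (a j * t) ≠ 0) :
    StrictMonoOn (tanSum a c) D :=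
  strictMonoOn_of_hasDerivWithinAt_pos hD
    (fun t ht => (hasDerivAt_tanSum (hcos t ht)).continuousAt.continuousWithinAt)
    (fun t ht => (hasDerivAt_tanSum (hcos t (interior_subset ht))).hasDerivWithinAt)
    fun t ht => Finset.sum_pos (fun j _ => div_pos (mul_pos (hc j) (ha j))
      (pow_two_pos_of_ne_zero (hcos t (interior_subset ht) j))) Finset.univ_nonempty

lemma continuousAt_tanSum_sub_of_cos_ne_zero {q : ℝ} (j₀ : ι)
    (hother : ∀ j ≠ j₀, cos (a j * q) ≠ 0) :
    ContinuousAt (fun t => tanSum a c t - c j₀ * tan (a j₀ * t)) q := by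
  classical
  have hrest : (fun t => tanSum a c t - c j₀ * tan (a j₀ * t)) =
      fun t => ∑ j ∈ Finset.univ.erase j₀, c j * tan (a j * t) := funext fun t => by
    rw [tanSum, ← Finset.sum_erase_add _ _ (Finset.mem_univ j₀), add_sub_cancel_right]
  rw [hrest]
  exact tendsto_finsetSum _ fun j hj => continuousAt_const.mul <|
    (continuousAt_tan.mpr (hother j (Finset.ne_of_mem_erase hj))).comp
      (continuous_const_mul (a j)).continuousAt

lemma tendsto_tanSum_nhdsLT_atTop {q : ℝ} {j₀ : ι} (ha : 0 < a j₀) (hc : 0 < c j₀)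
    (hpole : cos (a j₀ * q) = 0) (hother : ∀ j ≠ j₀, cos (a j * q) ≠ 0) :
    Tendsto (tanSum a c) (𝓝[<] q) atTop :=
  (((continuousAt_tanSum_sub_of_cos_ne_zero j₀ hother).tendsto.mono_left
    nhdsWithin_le_nhds).add_atTop ((tendsto_const_mul_atTop_of_pos hc).mpr
      ((tendsto_tan_nhdsLT_of_cos_eq_zero hpole).comp
        (TendstoNhdsWithinIio.const_mul ha tendsto_id)))).congr fun _ => sub_add_cancel _ _

lemma tendsto_tanSum_nhdsGT_atBot {q : ℝ} {j₀ : ι} (ha : 0 < a j₀) (hc : 0 < c j₀)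
    (hpole : cos (a j₀ * q) = 0) (hother : ∀ j ≠ j₀, cos (a j * q) ≠ 0) :
    Tendsto (tanSum a c) (𝓝[>] q) atBot :=
  (((continuousAt_tanSum_sub_of_cos_ne_zero j₀ hother).tendsto.mono_left
    nhdsWithin_le_nhds).add_atBot ((tendsto_const_mul_atBot_of_pos hc).mpr
      ((tendsto_tan_nhdsGT_of_cos_eq_zero hpole).comp
        (TendstoNhdsWithinIoi.const_mul ha tendsto_id)))).congr fun _ => sub_add_cancel _ _

lemma eventually_tanSum_pos_nhdsGT_zero [Nonempty ι] (ha : ∀ j, 0 < a j) (hc : ∀ j, 0 < c j) :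
    ∀ᶠ t in 𝓝[>] 0, 0 < tanSum a c t := by
  have hsmall : ∀ᶠ t in 𝓝[>] (0 : ℝ), ∀ j, a j * t < π / 2 := eventually_all.mpr fun j =>
    ((continuous_const_mul (a j)).tendsto' 0 0 (mul_zero _)).eventually_lt_const pi_div_two_pos
      |>.filter_mono nhdsWithin_le_nhds
  filter_upwards [hsmall, self_mem_nhdsWithin] with t hsmall ht
  exact Finset.sum_pos (fun j _ => mul_pos (hc j)
    (tan_pos_of_pos_of_lt_pi_div_two (mul_pos (ha j) ht) (hsmall j))) Finset.univ_nonempty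

end TanSum

section Poles

lemma finite_setOf_odd_mul_pi_div_two_lt (A : ℝ) :
    {m : ℕ | (2 * (m : ℝ) + 1) * π / 2 < A}.Finite :=
  (finite_Iio ⌈A⌉₊).subset fun m (hm : (2 * (m : ℝ) + 1) * π / 2 < A) =>
    Nat.lt_ceil.mpr (by nlinarith [pi_gt_three])

lemma setOf_cos_mul_eq_zero_eq_image {A : ℝ} (hA : 0 < A) :
    {t ∈ Ioo (0 : ℝ) 1 | cos (A * t) = 0} =
      (fun m : ℕ => (2 * m + 1) * π / (2 * A)) '' {m : ℕ | (2 * (m : ℝ) + 1) * π / 2 < A} := by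
  ext t
  constructor
  · rintro ⟨⟨ht0, ht1⟩, hcos⟩
    obtain ⟨k, hk⟩ := cos_eq_zero_iff.mp hcos
    have hk0 : 0 ≤ k := by
      have : (-1 : ℝ) < k := by nlinarith [pi_pos, mul_pos hA ht0]
      exact Int.lt_add_one_iff.mp (by exact_mod_cast (by linarith : (-1 : ℝ) + 1 < k + 1))
    lift k to ℕ using hk0
    push_cast at hk
    refine ⟨k, ?_, ?_⟩
    · show (2 * (k : ℝ) + 1) * π / 2 < A
      rw [← hk]
      exact mul_lt_of_lt_one_right hA ht1
    · field_simp
      linarith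
  · rintro ⟨m, hm : (2 * (m : ℝ) + 1) * π / 2 < A, rfl⟩
    refine ⟨⟨by positivity, (div_lt_one (by positivity)).mpr (by linarith)⟩, ?_⟩
    rw [show A * ((2 * m + 1) * π / (2 * A)) = (2 * (m : ℤ) + 1) * π / 2 by
      push_cast; field_simp]
    exact cos_eq_zero_iff.mpr ⟨m, rfl⟩

lemma ncard_setOf_cos_mul_eq_zero {A : ℝ} (hA : 0 < A) :
    {t ∈ Ioo (0 : ℝ) 1 | cos (A * t) = 0}.ncard =
      Nat.card {m : ℕ | (2 * (m : ℝ) + 1) * π / 2 < A} := by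
  have hinj : StrictMono fun m : ℕ => (2 * m + 1) * π / (2 * A) := fun m n hmn => by
    dsimp only; gcongr
  rw [setOf_cos_mul_eq_zero_eq_image hA, ncard_image_of_injective _ hinj.injective,
    Nat.card_coe_set_eq]

lemma ncard_setOf_exists_cos_mul_eq_zero {ι : Type*} [Fintype ι] {a : ι → ℝ}
    (ha : ∀ j, 0 < a j) (hdisj : ∀ t ∈ Ioo (0 : ℝ) 1, {j | cos (a j * t) = 0}.Subsingleton) :
    {t ∈ Ioo (0 : ℝ) 1 | ∃ j, cos (a j * t) = 0}.Finite ∧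
      {t ∈ Ioo (0 : ℝ) 1 | ∃ j, cos (a j * t) = 0}.ncard =
        ∑ j, Nat.card {m : ℕ | (2 * (m : ℝ) + 1) * π / 2 < a j} := by
  have hunion : {t ∈ Ioo (0 : ℝ) 1 | ∃ j, cos (a j * t) = 0} =
      ⋃ j, {t ∈ Ioo (0 : ℝ) 1 | cos (a j * t) = 0} := by
    ext t
    simp only [mem_ofPred_eq, mem_iUnion, exists_and_left]
  have hfin : ∀ j, {t ∈ Ioo (0 : ℝ) 1 | cos (a j * t) = 0}.Finite := fun j =>
    setOf_cos_mul_eq_zero_eq_image (ha j) ▸ (finite_setOf_odd_mul_pi_div_two_lt _).image _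
  rw [hunion]
  refine ⟨finite_iUnion hfin, ?_⟩
  rw [ncard_iUnion_of_finite hfin fun i j hij => disjoint_left.mpr fun t hi hj =>
    hij (hdisj t hi.1 hi.2 hj.2), finsum_eq_sum_of_fintype]
  exact Finset.sum_congr rfl fun j _ => ncard_setOf_cos_mul_eq_zero (ha j)

end Poles

/-- Zero counting for `F(t) = Σ c_j tan(a_j t)` on `(0,1]`: if all `a_j, c_j > 0`,
`cos (a_j) ≠ 0` for all `j`, and for every `t ∈ (0,1]` at most one index has
`cos (a_j t) = 0`, then the zero set `Z` of `F` in `(0,1]` is finite and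
`|Z| + 1 = P + χ`, where `P` is the number of poles of `F` in `(0,1)` and `χ = 1` iff
`F(1) ≥ 0`. -/
theorem stmt_13 (d : ℕ) (hd : 1 ≤ d) (a c : Fin d → ℝ)
    (ha : ∀ j, 0 < a j) (hc : ∀ j, 0 < c j)
    (hcos1 : ∀ j, Real.cos (a j) ≠ 0)
    (hone : ∀ t ∈ Set.Ioc (0 : ℝ) 1, {j : Fin d | Real.cos (a j * t) = 0}.Subsingleton) :
    {t ∈ Set.Ioc (0 : ℝ) 1 |
        (∀ j, Real.cos (a j * t) ≠ 0) ∧ ∑ j, c j * Real.tan (a j * t) = 0}.Finite ∧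
    {t ∈ Set.Ioc (0 : ℝ) 1 |
        (∀ j, Real.cos (a j * t) ≠ 0) ∧ ∑ j, c j * Real.tan (a j * t) = 0}.ncard + 1
      = (∑ j, Nat.card {m : ℕ | (2 * (m : ℝ) + 1) * Real.pi / 2 < a j})
        + (if 0 ≤ ∑ j, c j * Real.tan (a j) then 1 else 0) := by
  have : Nonempty (Fin d) := ⟨⟨0, hd⟩⟩
  obtain ⟨hPfin, hPcard⟩ := ncard_setOf_exists_cos_mul_eq_zero ha fun t ht => hone t ⟨ht.1, ht.2.le⟩
  obtain ⟨Q, hQ⟩ := hPfin.exists_finset_coe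
  have hregular : ∀ t ∈ Ioc (0 : ℝ) 1, t ∉ (Q : Set ℝ) ↔ ∀ j, cos (a j * t) ≠ 0 := by
    rintro t ⟨ht0, ht1⟩
    rcases ht1.eq_or_lt with rfl | ht1
    · simpa [hQ] using hcos1
    · simp [hQ, ht0, ht1]
  have hpole : ∀ q ∈ Q, ∃ j₀, cos (a j₀ * q) = 0 ∧ ∀ j ≠ j₀, cos (a j * q) ≠ 0 := by
    intro q hq
    obtain ⟨hq, j₀, hj₀⟩ : q ∈ {t ∈ Ioo (0 : ℝ) 1 | ∃ j, cos (a j * t) = 0} := hQ ▸ hq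
    exact ⟨j₀, hj₀, fun j hj h => hj (hone q ⟨hq.1, hq.2.le⟩ h hj₀)⟩
  obtain ⟨hfin, hcount⟩ := ncard_zeros_add_one_eq_card_poles (F := tanSum a c) Q one_pos
    (hQ ▸ fun t ht => ht.1)
    (fun s t hst => strictMonoOn_tanSum ha hc (convex_Ioc s t) fun u hu =>
      (hregular u (hst hu).1).mp (hst hu).2)
    (fun t ht => (hasDerivAt_tanSum ((hregular t ht.1).mp ht.2)).continuousAt.continuousWithinAt)
    (fun q hq => have ⟨j₀, hj₀, hother⟩ := hpole q hq
      (tendsto_tanSum_nhdsGT_atBot (ha j₀) (hc j₀) hj₀ hother).eventually (eventually_lt_atBot 0))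
    (fun q hq => have ⟨j₀, hj₀, hother⟩ := hpole q hq
      (tendsto_tanSum_nhdsLT_atTop (ha j₀) (hc j₀) hj₀ hother).eventually (eventually_gt_atTop 0))
    (eventually_tanSum_pos_nhdsGT_zero ha hc)
  have hzeros : {t ∈ Ioc (0 : ℝ) 1 | (∀ j, cos (a j * t) ≠ 0) ∧ ∑ j, c j * tan (a j * t) = 0} =
      {t ∈ Ioc (0 : ℝ) 1 \ Q | tanSum a c t = 0} := by
    ext t
    simp only [mem_ofPred_eq, Set.mem_sdiff, tanSum]
    exact ⟨fun ⟨ht, hreg, hF⟩ => ⟨⟨ht, (hregular t ht).mpr hreg⟩, hF⟩,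
      fun ⟨⟨ht, htQ⟩, hF⟩ => ⟨ht, (hregular t ht).mp htQ, hF⟩⟩
  rw [hzeros, ← hPcard, ← hQ, ncard_coe_finset]
  refine ⟨hfin, ?_⟩
  simpa [tanSum] using hcount
end

section
/- Let d ≥ 1 and let θ_1, …, θ_d be real numbers with θ_j ∈ (0, π) and θ_j ≠ π/2 for every j, satisfying Σ_{j=1}^d tan(θ_j) = 0. Set N := |{ j : θ_j > π/2 }|. Then 1 ≤ N ≤ d − 1 (in particular d ≥ 2), and (N + 1)·π/2 ≤ Σ_{j=1}^d θ_j ≤ (N + d − 1)·π/2. -/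
/-!
On the acute edges `tan` is positive and on the obtuse ones negative, so `Σ tan θ_j = 0` forces
an obtuse angle `θ_s`. The acute angles then carry `Σ tan ≥ -tan θ_s = tan (π - θ_s)`, and since
`tan` is superadditive on `[0, π/2)` their sum is at least `π - θ_s`; the other obtuse angles
contribute more than `π/2` each, which gives the lower bound. The map `θ ↦ π - θ` preserves the
hypotheses and exchanges acute and obtuse angles, which turns the lower bound into the upper one.
-/

open Real Finset

namespace Real

theorem tan_neg_of_pi_div_two_lt_of_lt_pi {x : ℝ} (h₁ : π / 2 < x) (h₂ : x < π) : tan x < 0 := by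
  have : 0 < tan (π - x) := tan_pos_of_pos_of_lt_pi_div_two (by linarith) (by linarith)
  rwa [tan_pi_sub, neg_pos] at this

theorem tan_add_tan_le_tan_add {a b : ℝ} (ha : 0 ≤ a) (hb : 0 ≤ b) (hab : a + b < π / 2) :
    tan a + tan b ≤ tan (a + b) := by
  have hca : 0 < cos a := cos_pos_of_mem_Ioo ⟨by linarith [pi_pos], by linarith⟩
  have hcb : 0 < cos b := cos_pos_of_mem_Ioo ⟨by linarith [pi_pos], by linarith⟩
  have hcab : 0 < cos (a + b) := cos_pos_of_mem_Ioo ⟨by linarith [pi_pos], hab⟩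
  have hsab : 0 ≤ sin (a + b) := sin_nonneg_of_nonneg_of_le_pi (by linarith) (by linarith)
  have hsasb : 0 ≤ sin a * sin b := mul_nonneg
    (sin_nonneg_of_nonneg_of_le_pi ha (by linarith)) (sin_nonneg_of_nonneg_of_le_pi hb (by linarith))
  calc tan a + tan b = sin (a + b) / (cos a * cos b) := by
        rw [tan_eq_sin_div_cos, tan_eq_sin_div_cos, div_add_div _ _ hca.ne' hcb.ne', sin_add]
    _ ≤ sin (a + b) / cos (a + b) :=
        div_le_div_of_nonneg_left hsab hcab (by rw [cos_add]; linarith)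
    _ = tan (a + b) := (tan_eq_sin_div_cos _).symm

theorem sum_tan_le_tan_sum {ι : Type*} {s : Finset ι} {f : ι → ℝ} (hf : ∀ i ∈ s, 0 ≤ f i)
    (hs : ∑ i ∈ s, f i < π / 2) : ∑ i ∈ s, tan (f i) ≤ tan (∑ i ∈ s, f i) := by
  induction s using Finset.cons_induction with
  | empty => simp
  | cons a s has ih =>
    rw [sum_cons] at hs
    rw [sum_cons, sum_cons]
    have hfa : 0 ≤ f a := hf a (mem_cons_self a s)
    have hfs : ∀ i ∈ s, 0 ≤ f i := fun i hi => hf i (mem_cons_of_mem hi)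
    have := ih hfs (by linarith)
    have := tan_add_tan_le_tan_add hfa (sum_nonneg hfs) hs
    linarith

theorem le_sum_of_tan_le_sum_tan {ι : Type*} {s : Finset ι} {f : ι → ℝ} {x : ℝ}
    (hf : ∀ i ∈ s, 0 ≤ f i) (hx : x < π / 2) (h : tan x ≤ ∑ i ∈ s, tan (f i)) :
    x ≤ ∑ i ∈ s, f i := by
  by_contra! hlt
  have := tan_lt_tan_of_nonneg_of_lt_pi_div_two (sum_nonneg hf) hx hlt
  have := sum_tan_le_tan_sum hf (hlt.trans hx)
  linarith

end Real

/-- The angles `θ_j = k l_j` of a Neumann-domain star graph whose eigenfunction has no interior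
critical points; the last condition is the Neumann condition at the centre. -/
structure IsNeumannStar {ι : Type*} [Fintype ι] (θ : ι → ℝ) : Prop where
  mem_Ioo : ∀ j, θ j ∈ Set.Ioo 0 π
  ne_pi_div_two : ∀ j, θ j ≠ π / 2
  sum_tan : ∑ j, tan (θ j) = 0

namespace IsNeumannStar

variable {ι : Type*} [Fintype ι] {θ : ι → ℝ}

theorem pi_sub (h : IsNeumannStar θ) : IsNeumannStar fun j => π - θ j where
  mem_Ioo j := ⟨by linarith [(h.mem_Ioo j).2], by linarith [(h.mem_Ioo j).1]⟩
  ne_pi_div_two j hj := h.ne_pi_div_two j (by linarith)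
  sum_tan := by simp only [tan_pi_sub, sum_neg_distrib, h.sum_tan, neg_zero]

theorem card_pi_sub_add_card (h : IsNeumannStar θ) :
    #{j | π / 2 < π - θ j} + #{j | π / 2 < θ j} = Fintype.card ι := by
  have hacute : univ.filter (fun j => π / 2 < π - θ j) = univ.filter fun j => ¬ π / 2 < θ j :=
    filter_congr fun j _ => ⟨fun _ => not_lt.2 (by linarith),
      fun hj => by linarith [(not_lt.1 hj).lt_of_ne (h.ne_pi_div_two j)]⟩
  rw [hacute, add_comm, card_filter_add_card_filter_not, card_univ]

theorem exists_pi_div_two_lt [Nonempty ι] (h : IsNeumannStar θ) : ∃ j, π / 2 < θ j := by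
  by_contra! hle
  have hpos : 0 < ∑ j, tan (θ j) := sum_pos (fun j _ => tan_pos_of_pos_of_lt_pi_div_two
    (h.mem_Ioo j).1 ((hle j).lt_of_ne (h.ne_pi_div_two j))) univ_nonempty
  linarith [h.sum_tan]

theorem card_add_one_mul_pi_div_two_le_sum [Nonempty ι] (h : IsNeumannStar θ) :
    ((#{j | π / 2 < θ j} : ℝ) + 1) * π / 2 ≤ ∑ j, θ j := by
  obtain ⟨s, hs⟩ := h.exists_pi_div_two_lt
  have hsS : s ∈ univ.filter fun j => π / 2 < θ j := mem_filter.2 ⟨mem_univ s, hs⟩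
  have hobtuse : θ s - π / 2 ≤ ∑ j ∈ {j | π / 2 < θ j}, (θ j - π / 2) :=
    single_le_sum (f := fun j => θ j - π / 2)
      (fun j hj => sub_nonneg.2 (mem_filter.1 hj).2.le) hsS
  have hobtuse_tan : -tan (θ s) ≤ ∑ j ∈ {j | π / 2 < θ j}, -tan (θ j) :=
    single_le_sum (f := fun j => -tan (θ j)) (fun j hj => neg_nonneg.2
      (tan_neg_of_pi_div_two_lt_of_lt_pi (mem_filter.1 hj).2 (h.mem_Ioo j).2).le) hsS
  have hacute : π - θ s ≤ ∑ j ∈ {j | ¬ π / 2 < θ j}, θ j := by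
    refine le_sum_of_tan_le_sum_tan (fun j _ => (h.mem_Ioo j).1.le) (by linarith) ?_
    have := sum_filter_add_sum_filter_not univ (fun j => π / 2 < θ j) fun j => tan (θ j)
    rw [sum_neg_distrib] at hobtuse_tan
    linarith [tan_pi_sub (θ s), h.sum_tan]
  have := sum_filter_add_sum_filter_not univ (fun j => π / 2 < θ j) θ
  rw [sum_sub_distrib, sum_const, nsmul_eq_mul] at hobtuse
  linarith

theorem sum_le_card_add_card_sub_one_mul_pi_div_two [Nonempty ι] (h : IsNeumannStar θ) :
    ∑ j, θ j ≤ ((#{j | π / 2 < θ j} : ℝ) + Fintype.card ι - 1) * π / 2 := by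
  have hlower := h.pi_sub.card_add_one_mul_pi_div_two_le_sum
  have hcard : (#{j | π / 2 < π - θ j} : ℝ) + #{j | π / 2 < θ j} = Fintype.card ι := by
    exact_mod_cast h.card_pi_sub_add_card
  rw [sum_sub_distrib, sum_const, card_univ, nsmul_eq_mul] at hlower
  nlinarith [pi_pos]

theorem one_le_card [Nonempty ι] (h : IsNeumannStar θ) : 1 ≤ #{j | π / 2 < θ j} :=
  card_pos.2 (h.exists_pi_div_two_lt.imp fun _ hj => by simpa using hj)

theorem card_add_one_le [Nonempty ι] (h : IsNeumannStar θ) :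
    #{j | π / 2 < θ j} + 1 ≤ Fintype.card ι := by
  have := h.pi_sub.one_le_card
  have := h.card_pi_sub_add_card
  omega

end IsNeumannStar

/-- Bounds on the spectral position and wavelength capacity of a Neumann-domain star:
if `θ_j ∈ (0,π) \ {π/2}` satisfy `Σ tan θ_j = 0` and `N = |{j : θ_j > π/2}|`, then
`1 ≤ N ≤ d - 1` (so `d ≥ 2`) and `(N+1)π/2 ≤ Σ θ_j ≤ (N + d - 1)π/2`. -/
theorem stmt_17 (d : ℕ) (hd : 1 ≤ d) (θ : Fin d → ℝ)
    (hθ : ∀ j, θ j ∈ Set.Ioo (0 : ℝ) Real.pi) (hθ' : ∀ j, θ j ≠ Real.pi / 2)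
    (hsum : ∑ j, Real.tan (θ j) = 0)
    (N : ℕ) (hN : N = {j : Fin d | Real.pi / 2 < θ j}.ncard) :
    1 ≤ N ∧ N + 1 ≤ d ∧ 2 ≤ d ∧
    ((N : ℝ) + 1) * Real.pi / 2 ≤ ∑ j, θ j ∧
    (∑ j, θ j) ≤ ((N : ℝ) + (d : ℝ) - 1) * Real.pi / 2 := by
  have : Nonempty (Fin d) := ⟨⟨0, hd⟩⟩
  have h : IsNeumannStar θ := ⟨hθ, hθ', hsum⟩
  have hNcard : N = #{j | π / 2 < θ j} := by
    rw [hN, Set.ncard_eq_toFinset_card', Set.toFinset_ofPred]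
  have hpos := h.one_le_card
  have hlt := h.card_add_one_le
  rw [Fintype.card_fin, ← hNcard] at hlt
  refine ⟨hNcard ▸ hpos, hlt, by omega, ?_, ?_⟩
  · exact hNcard ▸ h.card_add_one_mul_pi_div_two_le_sum
  · simpa [hNcard] using h.sum_le_card_add_card_sub_one_mul_pi_div_two
end

section
/- Let d ≥ 1 and let θ_1, …, θ_d be real numbers with θ_j ∈ (0, π) and θ_j ≠ π/2 for every j, satisfying Σ_{j=1}^d cot(θ_j) = 0. Set ξ := |{ j : θ_j > π/2 }|. Then 1 ≤ ξ ≤ d − 1 (in particular d ≥ 2), and (ξ + 1)·π/2 ≤ Σ_{j=1}^d θ_j ≤ (ξ + d − 1)·π/2. -/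
open Real Finset

/-- arctan is subadditive on nonnegatives. -/
lemma my_arctan_add_le {a b : ℝ} (ha : 0 ≤ a) (hb : 0 ≤ b) :
    Real.arctan (a + b) ≤ Real.arctan a + Real.arctan b := by
  rcases eq_or_lt_of_le ha with h | ha'
  · simp [← h]
  rcases eq_or_lt_of_le hb with h | hb'
  · simp [← h]
  rcases lt_or_ge (a * b) 1 with hab | hab
  · rw [Real.arctan_add hab]
    apply Real.arctan_strictMono.monotone
    rw [le_div_iff₀ (by nlinarith : (0:ℝ) < 1 - a * b)]
    nlinarith [mul_nonneg (add_nonneg ha hb) (mul_nonneg ha hb)]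
  · have h1 : Real.arctan b⁻¹ ≤ Real.arctan a := by
      apply Real.arctan_strictMono.monotone
      rw [inv_le_iff_one_le_mul₀ hb']
      nlinarith
    rw [Real.arctan_inv_of_pos hb'] at h1
    linarith [Real.arctan_lt_pi_div_two (a + b)]

/-- finset subadditivity of arctan on nonnegative functions -/
lemma my_arctan_sum_le {α : Type*} (s : Finset α) (f : α → ℝ) (hf : ∀ i ∈ s, 0 ≤ f i) :
    Real.arctan (∑ i ∈ s, f i) ≤ ∑ i ∈ s, Real.arctan (f i) := by
  induction s using Finset.cons_induction with
  | empty => simp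
  | cons a s ha ih =>
    rw [Finset.sum_cons, Finset.sum_cons]
    calc Real.arctan (f a + ∑ i ∈ s, f i)
        ≤ Real.arctan (f a) + Real.arctan (∑ i ∈ s, f i) :=
          my_arctan_add_le (hf a (Finset.mem_cons_self a s))
            (Finset.sum_nonneg fun i hi => hf i (Finset.mem_cons_of_mem hi))
      _ ≤ _ := by
          gcongr
          exact ih fun i hi => hf i (Finset.mem_cons_of_mem hi)

/-- sum of arctans of positives bound -/
lemma my_sum_arctan_pos_le {α : Type*} (s : Finset α) (hs : s.Nonempty) (f : α → ℝ)
    (hf : ∀ i ∈ s, 0 < f i) :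
    ∑ i ∈ s, Real.arctan (f i) ≤ (s.card - 1 : ℝ) * (Real.pi / 2)
      + Real.arctan (∑ i ∈ s, f i) := by
  induction hs using Finset.Nonempty.cons_induction with
  | singleton a => simp
  | cons a s ha hs ih =>
    rw [Finset.sum_cons, Finset.sum_cons, Finset.card_cons]
    have hfs : ∀ i ∈ s, 0 < f i := fun i hi => hf i (Finset.mem_cons_of_mem hi)
    have hS : 0 < ∑ i ∈ s, f i := Finset.sum_pos hfs hs
    have hfa : 0 < f a := hf a (Finset.mem_cons_self a s)
    have key : Real.arctan (f a) + Real.arctan (∑ i ∈ s, f i)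
        ≤ Real.pi / 2 + Real.arctan (f a + ∑ i ∈ s, f i) := by
      have h1 : Real.arctan (∑ i ∈ s, f i) ≤ Real.arctan (f a + ∑ i ∈ s, f i) :=
        Real.arctan_strictMono.monotone (by linarith)
      linarith [Real.arctan_lt_pi_div_two (f a)]
    have := ih hfs
    push_cast
    linarith

/-- Key lemma: nonzero reals summing to zero. -/
lemma my_key {n : ℕ} (t : Fin n → ℝ) (ht : ∀ j, t j ≠ 0) (hsum : ∑ j, t j = 0)
    (hP : (Finset.univ.filter (fun j => 0 < t j)).Nonempty)
    (hN : (Finset.univ.filter (fun j => t j < 0)).Nonempty) :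
    ∑ j, Real.arctan (t j)
      ≤ ((Finset.univ.filter (fun j => 0 < t j)).card - 1 : ℝ) * (Real.pi / 2) := by
  classical
  set P := Finset.univ.filter (fun j => 0 < t j) with hPdef
  set N := Finset.univ.filter (fun j => t j < 0) with hNdef
  have hsplit : ∀ g : Fin n → ℝ, ∑ j, g j = ∑ j ∈ P, g j + ∑ j ∈ N, g j := by
    intro g
    have hdisj : Disjoint P N := by
      simp only [Finset.disjoint_left, hPdef, hNdef, Finset.mem_filter]
      rintro a ⟨-, h1⟩ ⟨-, h2⟩; linarith
    have hunion : P ∪ N = Finset.univ := by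
      ext j
      simp only [Finset.mem_union, hPdef, hNdef, Finset.mem_filter, Finset.mem_univ,
        true_and, iff_true]
      rcases (ht j).lt_or_gt with h | h
      · right; exact h
      · left; exact h
    rw [← Finset.sum_union hdisj, hunion]
  have hsum2 : ∑ j ∈ P, t j + ∑ j ∈ N, t j = 0 := by rw [← hsplit]; exact hsum
  have h1 : ∑ j ∈ P, Real.arctan (t j) ≤ (P.card - 1 : ℝ) * (Real.pi / 2)
      + Real.arctan (∑ j ∈ P, t j) :=
    my_sum_arctan_pos_le P hP t (fun i hi => (Finset.mem_filter.mp hi).2)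
  have h2 : ∑ j ∈ N, Real.arctan (t j) ≤ Real.arctan (∑ j ∈ N, t j) := by
    have := my_arctan_sum_le N (fun j => -(t j))
      (fun i hi => neg_nonneg.mpr ((Finset.mem_filter.mp hi).2).le)
    simp only [Real.arctan_neg, Finset.sum_neg_distrib, Real.arctan_neg] at this
    linarith
  have h3 : ∑ j ∈ N, t j = -(∑ j ∈ P, t j) := by linarith
  rw [hsplit (fun j => Real.arctan (t j))]
  rw [h3, Real.arctan_neg] at h2
  linarith

lemma my_theta_eq {x : ℝ} (hx : x ∈ Set.Ioo (0 : ℝ) Real.pi) (hx' : x ≠ Real.pi / 2) :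
    Real.arctan (Real.cot x) = Real.pi / 2 - x := by
  have hsin : Real.sin x ≠ 0 := ne_of_gt (Real.sin_pos_of_pos_of_lt_pi hx.1 hx.2)
  have hcot : Real.cot x = Real.tan (Real.pi / 2 - x) := by
    rw [Real.tan_pi_div_two_sub, Real.cot_eq_cos_div_sin, Real.tan_eq_sin_div_cos,
      inv_div]
  rw [hcot, Real.arctan_tan (by linarith [hx.2]) (by linarith [hx.1])]

/-- Bounds on the Neumann count and wavelength capacity of a nodal-domain star:
if `θ_j ∈ (0,π) \ {π/2}` satisfy `Σ cot θ_j = 0` and `ξ = |{j : θ_j > π/2}|`, then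
`1 ≤ ξ ≤ d - 1` (so `d ≥ 2`) and `(ξ+1)π/2 ≤ Σ θ_j ≤ (ξ + d - 1)π/2`. -/
theorem stmt_18 (d : ℕ) (hd : 1 ≤ d) (θ : Fin d → ℝ)
    (hθ : ∀ j, θ j ∈ Set.Ioo (0 : ℝ) Real.pi) (hθ' : ∀ j, θ j ≠ Real.pi / 2)
    (hsum : ∑ j, Real.cot (θ j) = 0)
    (ξ : ℕ) (hξ : ξ = {j : Fin d | Real.pi / 2 < θ j}.ncard) :
    1 ≤ ξ ∧ ξ + 1 ≤ d ∧ 2 ≤ d ∧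
    ((ξ : ℝ) + 1) * Real.pi / 2 ≤ ∑ j, θ j ∧
    (∑ j, θ j) ≤ ((ξ : ℝ) + (d : ℝ) - 1) * Real.pi / 2 := by
  classical
  have hu : (Finset.univ : Finset (Fin d)).Nonempty := ⟨⟨0, by omega⟩, Finset.mem_univ _⟩
  set t : Fin d → ℝ := fun j => Real.cot (θ j) with htdef
  have harc : ∀ j, Real.arctan (t j) = Real.pi / 2 - θ j :=
    fun j => my_theta_eq (hθ j) (hθ' j)
  have ht0 : ∀ j, t j ≠ 0 := by
    intro j h
    have := harc j
    rw [h, Real.arctan_zero] at this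
    exact hθ' j (by linarith)
  have htneg : ∀ j, t j < 0 ↔ Real.pi / 2 < θ j := by
    intro j
    constructor
    · intro h
      have : Real.arctan (t j) < 0 := by
        rw [← Real.arctan_zero]; exact Real.arctan_strictMono h
      rw [harc j] at this; linarith
    · intro h
      by_contra hc
      push_neg at hc
      have : 0 ≤ Real.arctan (t j) := by
        rw [← Real.arctan_zero]; exact Real.arctan_strictMono.monotone hc
      rw [harc j] at this; linarith
  set N := Finset.univ.filter (fun j => t j < 0) with hNdef
  set P := Finset.univ.filter (fun j => 0 < t j) with hPdef
  have hPN : P.card + N.card = d := by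
    have hdisj : Disjoint P N := by
      simp only [Finset.disjoint_left, hPdef, hNdef, Finset.mem_filter]
      rintro a ⟨-, h1⟩ ⟨-, h2⟩; linarith
    have hunion : P ∪ N = Finset.univ := by
      ext j
      simp only [Finset.mem_union, hPdef, hNdef, Finset.mem_filter, Finset.mem_univ,
        true_and, iff_true]
      rcases (ht0 j).lt_or_gt with h | h
      · right; exact h
      · left; exact h
    rw [← Finset.card_union_of_disjoint hdisj, hunion, Finset.card_univ, Fintype.card_fin]
  have hξN : ξ = N.card := by
    rw [hξ]
    have : {j : Fin d | Real.pi / 2 < θ j} = ↑N := by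
      ext j
      simp only [Set.mem_setOf_eq, Finset.coe_filter, hNdef, Finset.mem_univ, true_and]
      exact (htneg j).symm
    rw [this, Set.ncard_coe_finset]
  have hsumt : ∑ j, t j = 0 := hsum
  have hPne : P.Nonempty := by
    by_contra h
    rw [Finset.not_nonempty_iff_eq_empty] at h
    have hneg : ∀ j, t j < 0 := by
      intro j
      rcases (ht0 j).lt_or_gt with hh | hh
      · exact hh
      · exfalso
        have : j ∈ P := by simp [hPdef, hh]
        simp [h] at this
    have : ∑ j, t j < 0 := by
      exact Finset.sum_neg (fun j _ => hneg j) hu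
    linarith
  have hNne : N.Nonempty := by
    by_contra h
    rw [Finset.not_nonempty_iff_eq_empty] at h
    have hpos : ∀ j, 0 < t j := by
      intro j
      rcases (ht0 j).lt_or_gt with hh | hh
      · exfalso
        have : j ∈ N := by simp [hNdef, hh]
        simp [h] at this
      · exact hh
    have : 0 < ∑ j, t j := Finset.sum_pos (fun j _ => hpos j) hu
    linarith
  -- Apply key lemma to t and -t
  have hA1 : ∑ j, Real.arctan (t j) ≤ ((P.card : ℝ) - 1) * (Real.pi / 2) :=
    my_key t ht0 hsumt hPne hNne
  have hA2 : ∑ j, Real.arctan (-(t j)) ≤ ((N.card : ℝ) - 1) * (Real.pi / 2) := by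
    have h0 : ∀ j, -(t j) ≠ 0 := fun j h => ht0 j (by linarith [neg_eq_zero.mp h])
    have hs0 : ∑ j, -(t j) = 0 := by rw [Finset.sum_neg_distrib, hsumt, neg_zero]
    have hP' : (Finset.univ.filter (fun j => 0 < -(t j))).Nonempty := by
      convert hNne using 2
      simp [hNdef]
    have hN' : (Finset.univ.filter (fun j => -(t j) < 0)).Nonempty := by
      convert hPne using 2
      simp [hPdef]
    have := my_key (fun j => -(t j)) h0 hs0 hP' hN'
    have hcard : (Finset.univ.filter (fun j => 0 < -(t j))).card = N.card := by
      congr 1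
      ext j; simp [hNdef]
    rw [hcard] at this
    exact this
  have hA2' : -((N.card : ℝ) - 1) * (Real.pi / 2) ≤ ∑ j, Real.arctan (t j) := by
    simp only [Real.arctan_neg, Finset.sum_neg_distrib] at hA2
    linarith
  have hsum_eq : ∑ j, Real.arctan (t j) = (d : ℝ) * (Real.pi / 2) - ∑ j, θ j := by
    calc ∑ j, Real.arctan (t j) = ∑ j, (Real.pi / 2 - θ j) :=
          Finset.sum_congr rfl fun j _ => harc j
      _ = (d : ℝ) * (Real.pi / 2) - ∑ j, θ j := by
          rw [Finset.sum_sub_distrib, Finset.sum_const, Finset.card_univ, Fintype.card_fin,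
            nsmul_eq_mul]
  have hNcard1 : 1 ≤ N.card := Finset.card_pos.mpr hNne
  have hPcard1 : 1 ≤ P.card := Finset.card_pos.mpr hPne
  have hPcardR : (P.card : ℝ) = (d : ℝ) - ξ := by
    rw [hξN]
    have : (P.card : ℝ) + N.card = d := by exact_mod_cast hPN
    linarith
  refine ⟨by omega, by omega, by omega, ?_, ?_⟩
  · -- lower bound: from hA1
    rw [hsum_eq, hPcardR] at hA1
    have : ((ξ : ℝ) + 1) * Real.pi / 2 = ((ξ:ℝ) + 1) * (Real.pi / 2) := by ring
    rw [this]
    linarith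
  · rw [hsum_eq] at hA2'
    rw [hξN]
    have h : ((N.card : ℝ) + (d : ℝ) - 1) * Real.pi / 2
        = ((N.card : ℝ) + (d : ℝ) - 1) * (Real.pi / 2) := by ring
    rw [h]
    linarith
end
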